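/- arXiv:math/0605150 — 3 statements merged into one kernel-verified Lean document; each statement's English description precedes it below -/
import Mathlib

section
/- Let Σ be a rational pointed non-pure shellable fan in R^d with shelling C_1, ..., C_s of its facets. Then there exists a permutation σ of {1,...,s} such that C_{σ(1)}, ..., C_{σ(s)} is again a shelling of Σ and dim C_{σ(1)} ≥ dim C_{σ(2)} ≥ ... ≥ dim C_{σ(s)}. -/
open RingTheory.Sequence

noncomputable section

/-! ### Rational pointed fans in `ℝ^d` -/

/-- Euclidean `d`-space. -/
abbrev Vec (d : ℕ) := Fin d → ℝ

/-- A vector with rational coordinates. -/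
def RatVec {d : ℕ} (v : Vec d) : Prop := ∀ i, ∃ q : ℚ, v i = (q : ℝ)

/-- The cone (set of all finite nonnegative real combinations) generated by a set. -/
def coneGen {d : ℕ} (S : Set (Vec d)) : Set (Vec d) :=
  { x | ∃ (t : Finset (Vec d)) (lam : Vec d → ℝ), ↑t ⊆ S ∧ (∀ v, 0 ≤ lam v) ∧
      x = ∑ v ∈ t, lam v • v }

/-- A rational (polyhedral) cone: the cone generated by finitely many rational vectors. -/
def IsRatCone {d : ℕ} (C : Set (Vec d)) : Prop :=
  ∃ t : Finset (Vec d), (∀ v ∈ t, RatVec v) ∧ C = coneGen (↑t : Set (Vec d))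

/-- A pointed cone: `0` is the only element whose negative also lies in the cone. -/
def IsPointed {d : ℕ} (C : Set (Vec d)) : Prop := ∀ x ∈ C, -x ∈ C → x = 0

/-- `F` is a face of the cone `C`. -/
def IsFaceOf {d : ℕ} (F C : Set (Vec d)) : Prop :=
  F ⊆ C ∧ IsRatCone F ∧ ∀ x ∈ C, ∀ y ∈ C, x + y ∈ F → x ∈ F

/-- A rational pointed fan in `ℝ^d`: a finite collection of rational pointed cones, closed
under taking faces, such that for members `C' ⊆ C` the cone `C'` is a face of `C`, and the
intersection of two members is a common face of both. -/
structure Fan (d : ℕ) where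
  cones : Set (Set (Vec d))
  finite : cones.Finite
  nonempty : cones.Nonempty
  isRatCone : ∀ C ∈ cones, IsRatCone C
  pointed : ∀ C ∈ cones, IsPointed C
  face_mem : ∀ C ∈ cones, ∀ F, IsFaceOf F C → F ∈ cones
  subset_face : ∀ C ∈ cones, ∀ C' ∈ cones, C' ⊆ C → IsFaceOf C' C
  inter_face : ∀ C ∈ cones, ∀ C' ∈ cones, IsFaceOf (C ∩ C') C ∧ IsFaceOf (C ∩ C') C'

/-- The dimension of a cone: the dimension of its linear span. -/
def coneDim {d : ℕ} (C : Set (Vec d)) : ℕ :=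
  Module.finrank ℝ (Submodule.span ℝ C)

/-- The dimension of a (sub)fan, given as a set of cones. -/
def fanSetDim {d : ℕ} (S : Set (Set (Vec d))) : ℕ := sSup (coneDim '' S)

/-- The dimension of a fan. -/
def Fan.dim {d : ℕ} (Φ : Fan d) : ℕ := fanSetDim Φ.cones

/-- A maximal cone (facet) of a fan. -/
def Fan.IsMaximalCone {d : ℕ} (Φ : Fan d) (C : Set (Vec d)) : Prop :=
  C ∈ Φ.cones ∧ ∀ D ∈ Φ.cones, C ⊆ D → D = C

/-- A fan is pure if all its maximal cones have the same dimension. -/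
def Fan.Pure {d : ℕ} (Φ : Fan d) : Prop :=
  ∀ C C', Φ.IsMaximalCone C → Φ.IsMaximalCone C' → coneDim C = coneDim C'

/-- A subfan: a subset of the cones, closed under taking faces. -/
def Fan.IsSubfan {d : ℕ} (Φ : Fan d) (S : Set (Set (Vec d))) : Prop :=
  S ⊆ Φ.cones ∧ ∀ C ∈ S, ∀ F ∈ Φ.cones, F ⊆ C → F ∈ S

/-- The canonical embedding `ℤ^d → ℝ^d`. -/
def latt {d : ℕ} (a : Fin d → ℤ) : Vec d := fun i => (a i : ℝ)

/-- The relative interior of a convex set. -/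
def relint {d : ℕ} (C : Set (Vec d)) : Set (Vec d) :=
  {x ∈ C | ∀ y ∈ C, ∃ t : ℝ, 1 < t ∧ t • x + (1 - t) • y ∈ C}

/-! ### Monoidal complexes and toric face rings -/

/-- A monoidal complex supported by a rational pointed fan `Φ`: a family of finitely
generated submonoids `M_C ⊆ ℤ^d` (for `C ∈ Φ`) with `cone(M_C) = C` and
`M_{C'} = M_C ∩ C'` for `C' ⊆ C` in `Φ`. -/
structure MonoidalComplex {d : ℕ} (Φ : Fan d) where
  mon : Set (Vec d) → AddSubmonoid (Fin d → ℤ)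
  fg : ∀ C ∈ Φ.cones, (mon C).FG
  cone_eq : ∀ C ∈ Φ.cones, coneGen (latt '' ((mon C : Set (Fin d → ℤ)))) = C
  compat : ∀ C ∈ Φ.cones, ∀ C' ∈ Φ.cones, C' ⊆ C →
    (mon C' : Set (Fin d → ℤ)) = (mon C : Set (Fin d → ℤ)) ∩ (latt ⁻¹' C')

/-- The set `|M_Φ|` of all lattice points of the monoidal complex. -/
def MonoidalComplex.supp {d : ℕ} {Φ : Fan d} (M : MonoidalComplex Φ) : Set (Fin d → ℤ) :=
  ⋃ C ∈ Φ.cones, (M.mon C : Set (Fin d → ℤ))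

/-- The lattice monoidal complex `N_Φ` (monoid `C ∩ ℤ^d` for each cone) is characterized by
this property. -/
def MonoidalComplex.IsLattice {d : ℕ} {Φ : Fan d} (M : MonoidalComplex Φ) : Prop :=
  ∀ C ∈ Φ.cones, (M.mon C : Set (Fin d → ℤ)) = latt ⁻¹' C

variable (K : Type*) [Field K]

/-- The defining relations of the toric face ring, inside the polynomial ring on the
variables `X a`, `a ∈ ℤ^d`:  `X a · X b = X (a+b)` if `a, b` lie in a common monoid of the
complex, `X a · X b = 0` otherwise, `X a = 0` for `a ∉ |M_Φ|`, and `X 0 = 1`. -/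
def tfrRel {d : ℕ} {Φ : Fan d} (M : MonoidalComplex Φ) :
    Ideal (MvPolynomial (Fin d → ℤ) K) :=
  Ideal.span (
    {p | ∃ a b, (∃ C ∈ Φ.cones, a ∈ M.mon C ∧ b ∈ M.mon C) ∧
        p = MvPolynomial.X a * MvPolynomial.X b - MvPolynomial.X (a + b)} ∪
    {p | ∃ a b, a ∈ M.supp ∧ b ∈ M.supp ∧ (¬ ∃ C ∈ Φ.cones, a ∈ M.mon C ∧ b ∈ M.mon C) ∧
        p = MvPolynomial.X a * MvPolynomial.X b} ∪
    {p | ∃ a, a ∉ M.supp ∧ p = MvPolynomial.X a} ∪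
    {MvPolynomial.X 0 - 1})

/-- The toric face ring `K[M_Φ]` of a monoidal complex, presented as a quotient of a
polynomial ring. -/
abbrev TFR {d : ℕ} {Φ : Fan d} (M : MonoidalComplex Φ) :=
  MvPolynomial (Fin d → ℤ) K ⧸ tfrRel K M

/-- The monomial `x^a` of the toric face ring. -/
def xv {d : ℕ} {Φ : Fan d} (M : MonoidalComplex Φ) (a : Fin d → ℤ) : TFR K M :=
  Ideal.Quotient.mk (tfrRel K M) (MvPolynomial.X a)

/-- The graded prime ideal `p_C = (x^a : a ∉ M_C)` of the toric face ring. -/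
def pIdeal {d : ℕ} {Φ : Fan d} (M : MonoidalComplex Φ) (C : Set (Vec d)) :
    Ideal (TFR K M) :=
  Ideal.span { x | ∃ a, a ∉ M.mon C ∧ x = xv K M a }

/-- The graded radical ideal `q_{Φ'} = (x^a : a ∉ |M_{Φ'}|)` attached to a subfan
(given by its set `S` of cones). -/
def qIdeal {d : ℕ} {Φ : Fan d} (M : MonoidalComplex Φ) (S : Set (Set (Vec d))) :
    Ideal (TFR K M) :=
  Ideal.span { x | ∃ a, a ∉ (⋃ C ∈ S, (M.mon C : Set (Fin d → ℤ))) ∧ x = xv K M a }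

/-- The unique graded maximal ideal `m = (x^a : a ≠ 0)` of the toric face ring. -/
def mIdeal {d : ℕ} {Φ : Fan d} (M : MonoidalComplex Φ) : Ideal (TFR K M) :=
  Ideal.span { x | ∃ a, a ≠ 0 ∧ x = xv K M a }

/-- An ideal of the toric face ring is `ℤ^d`-graded if together with (the class of) a
polynomial it contains all its `ℤ^d`-homogeneous components (with respect to the weights
`deg (X a) = a`). -/
def IsGradedIdeal {d : ℕ} {Φ : Fan d} (M : MonoidalComplex Φ) (P : Ideal (TFR K M)) :
    Prop :=
  ∀ p : MvPolynomial (Fin d → ℤ) K, Ideal.Quotient.mk (tfrRel K M) p ∈ P →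
    ∀ g : Fin d → ℤ, Ideal.Quotient.mk (tfrRel K M)
      (MvPolynomial.weightedHomogeneousComponent id g p) ∈ P

/-! ### Depth and Cohen–Macaulayness -/

/-- The depth of a module with respect to an ideal. -/
def moduleDepth (R : Type*) [CommRing R] (I : Ideal R) (M : Type*)
    [AddCommGroup M] [Module R M] : WithTop ℕ :=
  sSup {n : WithTop ℕ | ∃ rs : List R, (∀ r ∈ rs, r ∈ I) ∧
    RingTheory.Sequence.IsRegular M rs ∧ n = rs.length}

/-- The Krull dimension of a module. -/
def moduleDim (R : Type*) [CommRing R] (M : Type*) [AddCommGroup M]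
    [Module R M] : WithBot (WithTop ℕ) :=
  Order.krullDim (Module.support R M)

/-- A module is Cohen–Macaulay with respect to `I` if its `I`-depth equals its dimension. -/
def IsCMMod (R : Type*) [CommRing R] (I : Ideal R) (M : Type*) [AddCommGroup M]
    [Module R M] : Prop :=
  (moduleDepth R I M : WithBot (WithTop ℕ)) = moduleDim R M

/-- A `ℤ^d`-graded ring with graded maximal ideal `I` is Cohen–Macaulay if its `I`-depth
equals its Krull dimension. -/
def IsCMRingAt (R : Type*) [CommRing R] (I : Ideal R) : Prop :=
  (moduleDepth R I R : WithBot (WithTop ℕ)) = ringKrullDim R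

/-- The graded maximal ideal of an affine monoid algebra `K[M]`. -/
def monMaxIdeal (N : Type*) [AddCommMonoid N] : Ideal (AddMonoidAlgebra K N) :=
  Ideal.span { x | ∃ a : N, a ≠ 0 ∧ x = AddMonoidAlgebra.single a (1 : K) }

end

/-! ### Shellable fans -/

/-- The facets (maximal elements) of a set of cones. -/
def facetsOf {d : ℕ} (S : Set (Set (Vec d))) : Set (Set (Vec d)) :=
  {C ∈ S | ∀ D ∈ S, C ⊆ D → D = C}

/-- The faces of the cone `C` lying in the collection `S`; for `S` the set of cones of a fan
containing `C` this is the face fan `fan(C)`. -/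
def facesIn {d : ℕ} (S : Set (Set (Vec d))) (C : Set (Vec d)) : Set (Set (Vec d)) :=
  {F ∈ S | F ⊆ C}

/-- The boundary fan `fan(∂C)`: the proper faces of `C` in `S`. -/
def boundaryIn {d : ℕ} (S : Set (Set (Vec d))) (C : Set (Vec d)) : Set (Set (Vec d)) :=
  {F ∈ S | F ⊆ C ∧ F ≠ C}

/-- `IsShelling Φ S L`: the list `L` is a shelling of the subfan `S` of the fan `Φ`, in the
sense of Björner–Wachs: `L` enumerates the facets of `S` without repetition, and either
`dim S = 0`, or (i) the boundary fan of the first facet has a shelling, and (ii) for every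
later facet `C` (with predecessors `pre`) there is a shelling `D` of the boundary fan of `C`
and some `1 ≤ r ≤ |D|` such that `∅ ≠ ⋃_{C' ∈ pre} (fan(C') ∩ fan(C)) = ⋃_{l ≤ r} fan(D_l)`.
(The witnessing shellings are presented in Skolemized form `B`, `D`, `r`.) -/
inductive IsShelling {d : ℕ} (Φ : Fan d) : Set (Set (Vec d)) → List (Set (Vec d)) → Prop where
  | base (S : Set (Set (Vec d))) (L : List (Set (Vec d))) :
      L.Nodup → {C | C ∈ L} = facetsOf S → fanSetDim S = 0 → IsShelling Φ S L
  | step (S : Set (Set (Vec d))) (L : List (Set (Vec d)))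
      (B : Set (Vec d) → List (Set (Vec d)))
      (D : List (Set (Vec d)) → Set (Vec d) → List (Set (Vec d)))
      (r : List (Set (Vec d)) → Set (Vec d) → ℕ) :
      L.Nodup → {C | C ∈ L} = facetsOf S →
      (∀ C rest, L = C :: rest → IsShelling Φ (boundaryIn Φ.cones C) (B C)) →
      (∀ pre C post, L = pre ++ C :: post → pre ≠ [] →
        IsShelling Φ (boundaryIn Φ.cones C) (D pre C)) →
      (∀ pre C post, L = pre ++ C :: post → pre ≠ [] →
          1 ≤ r pre C ∧ r pre C ≤ (D pre C).length ∧
          (⋃ C' ∈ {x | x ∈ pre}, (facesIn Φ.cones C' ∩ facesIn Φ.cones C)).Nonempty ∧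
          (⋃ C' ∈ {x | x ∈ pre}, (facesIn Φ.cones C' ∩ facesIn Φ.cones C)) =
            ⋃ D' ∈ {x | x ∈ (D pre C).take (r pre C)}, facesIn Φ.cones D') →
      IsShelling Φ S L

/-- A fan is (non-pure) shellable if its set of cones admits a shelling. -/
def Fan.IsShellable {d : ℕ} (Φ : Fan d) : Prop :=
  ∃ L, IsShelling Φ Φ.cones L


/-! ### Auxiliary geometric lemmas -/

set_option maxHeartbeats 1000000
set_option synthInstance.maxHeartbeats 400000

open Classical

variable {d : ℕ}

lemma coneGen_zero_mem (S : Set (Vec d)) : (0 : Vec d) ∈ coneGen S := by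
  exact ⟨∅, fun _ => 0, by simp, fun _ => le_refl 0, by simp⟩

lemma coneGen_mono {S T : Set (Vec d)} (h : S ⊆ T) : coneGen S ⊆ coneGen T := by
  rintro x ⟨t, lam, ht, h0, rfl⟩
  exact ⟨t, lam, ht.trans h, h0, rfl⟩

lemma subset_coneGen (S : Set (Vec d)) : S ⊆ coneGen S := by
  intro v hv
  refine ⟨{v}, fun w => if w = v then 1 else 0, by simpa using hv, ?_, by simp⟩
  intro w; by_cases h : w = v <;> simp [h]

lemma coneGen_smul_mem {S : Set (Vec d)} {x : Vec d} (hx : x ∈ coneGen S) {c : ℝ}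
    (hc : 0 ≤ c) : c • x ∈ coneGen S := by
  obtain ⟨t, lam, ht, h0, rfl⟩ := hx
  exact ⟨t, fun v => c * lam v, ht, fun v => mul_nonneg hc (h0 v), by
    rw [Finset.smul_sum]; exact Finset.sum_congr rfl fun v _ => by
      show c • lam v • v = (c * lam v) • v
      rw [smul_smul]⟩

lemma coneGen_add_mem {S : Set (Vec d)} {x y : Vec d} (hx : x ∈ coneGen S)
    (hy : y ∈ coneGen S) : x + y ∈ coneGen S := by
  obtain ⟨t1, lam1, ht1, h01, rfl⟩ := hx
  obtain ⟨t2, lam2, ht2, h02, rfl⟩ := hy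
  refine ⟨t1 ∪ t2, fun v => (if v ∈ t1 then lam1 v else 0) + (if v ∈ t2 then lam2 v else 0),
    ?_, ?_, ?_⟩
  · intro v hv; rcases Finset.mem_union.1 (by exact_mod_cast hv) with h | h
    · exact ht1 h
    · exact ht2 h
  · intro v
    have h1 : (0:ℝ) ≤ (if v ∈ t1 then lam1 v else 0) := by
      split
      · exact h01 v
      · exact le_refl 0
    have h2 : (0:ℝ) ≤ (if v ∈ t2 then lam2 v else 0) := by
      split
      · exact h02 v
      · exact le_refl 0
    exact add_nonneg h1 h2
  · have e1 : ∑ v ∈ t1 ∪ t2, (if v ∈ t1 then lam1 v else 0) • v = ∑ v ∈ t1, lam1 v • v := by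
      rw [← Finset.sum_subset Finset.subset_union_left (fun v _ hv => by simp [hv])]
      exact Finset.sum_congr rfl fun v hv => by simp [hv]
    have e2 : ∑ v ∈ t1 ∪ t2, (if v ∈ t2 then lam2 v else 0) • v = ∑ v ∈ t2, lam2 v • v := by
      rw [← Finset.sum_subset Finset.subset_union_right (fun v _ hv => by simp [hv])]
      exact Finset.sum_congr rfl fun v hv => by simp [hv]
    rw [← e1, ← e2, ← Finset.sum_add_distrib]
    exact Finset.sum_congr rfl fun v _ => (add_smul _ _ v).symm

/-- A set closed under the cone operations contains the cone generated by any subset. -/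
lemma coneGen_subset_of_closed {S T : Set (Vec d)} (hST : S ⊆ T)
    (h0 : (0:Vec d) ∈ T) (hadd : ∀ x ∈ T, ∀ y ∈ T, x + y ∈ T)
    (hsmul : ∀ x ∈ T, ∀ c : ℝ, 0 ≤ c → c • x ∈ T) : coneGen S ⊆ T := by
  rintro x ⟨t, lam, ht, hlam, rfl⟩
  classical
  induction t using Finset.induction with
  | empty => simpa using h0
  | @insert a s ha ih =>
    rw [Finset.sum_insert ha]
    refine hadd _ (hsmul _ (hST (ht (by simp))) _ (hlam a)) _ (ih ?_)
    exact fun v hv => ht (by simp; exact Or.inr (by exact_mod_cast hv))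

lemma span_coneGen (S : Set (Vec d)) :
    Submodule.span ℝ (coneGen S) = Submodule.span ℝ S := by
  apply le_antisymm
  · rw [Submodule.span_le]
    rintro x ⟨t, lam, ht, h0, rfl⟩
    exact Submodule.sum_mem _ fun v hv =>
      Submodule.smul_mem _ _ (Submodule.subset_span (ht hv))
  · exact Submodule.span_mono (subset_coneGen S)

/-- Operations for a cone of the fan. -/
lemma Fan.zero_mem {Φ : Fan d} {C : Set (Vec d)} (hC : C ∈ Φ.cones) : (0:Vec d) ∈ C := by
  obtain ⟨t, -, rfl⟩ := Φ.isRatCone C hC; exact coneGen_zero_mem _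

lemma Fan.add_mem {Φ : Fan d} {C : Set (Vec d)} (hC : C ∈ Φ.cones) {x y : Vec d}
    (hx : x ∈ C) (hy : y ∈ C) : x + y ∈ C := by
  obtain ⟨t, -, rfl⟩ := Φ.isRatCone C hC; exact coneGen_add_mem hx hy

lemma Fan.smul_mem {Φ : Fan d} {C : Set (Vec d)} (hC : C ∈ Φ.cones) {x : Vec d}
    (hx : x ∈ C) {c : ℝ} (hc : 0 ≤ c) : c • x ∈ C := by
  obtain ⟨t, -, rfl⟩ := Φ.isRatCone C hC; exact coneGen_smul_mem hx hc

/-- A member of the fan contained in another equals the intersection with its span. -/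
lemma Fan.face_eq_inter_span {Φ : Fan d} {E C : Set (Vec d)} (hC : C ∈ Φ.cones)
    (hE : E ∈ Φ.cones) (hEC : E ⊆ C) :
    E = C ∩ ↑(Submodule.span ℝ E) := by
  obtain ⟨hsub, hrat, hface⟩ := Φ.subset_face C hC E hE hEC
  apply le_antisymm
  · exact fun x hx => ⟨hEC hx, Submodule.subset_span hx⟩
  rintro x ⟨hxC, hxsp⟩
  obtain ⟨s, -, hsE⟩ := Φ.isRatCone E hE
  have hspan : Submodule.span ℝ E = Submodule.span ℝ (↑s : Set (Vec d)) := by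
    rw [hsE, span_coneGen]
  rw [hspan] at hxsp
  obtain ⟨f, -, hf⟩ := Submodule.mem_span_finset.1 hxsp
  have hp : (∑ v ∈ s, (max (f v) 0) • v) ∈ E := by
    rw [hsE]
    exact ⟨s, fun v => if v ∈ s then max (f v) 0 else 0, le_refl _,
      fun v => by dsimp only; split <;> simp [le_max_right], Finset.sum_congr rfl fun v hv => by simp [hv]⟩
  have hn : (∑ v ∈ s, (max (-f v) 0) • v) ∈ E := by
    rw [hsE]
    exact ⟨s, fun v => if v ∈ s then max (-f v) 0 else 0, le_refl _,
      fun v => by dsimp only; split <;> simp [le_max_right], Finset.sum_congr rfl fun v hv => by simp [hv]⟩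
  have key : x + (∑ v ∈ s, (max (-f v) 0) • v) = ∑ v ∈ s, (max (f v) 0) • v := by
    rw [← hf, ← Finset.sum_add_distrib]
    refine Finset.sum_congr rfl fun v _ => ?_
    rw [← add_smul]
    congr 1
    rcases le_total (f v) 0 with h | h
    · rw [max_eq_right h, max_eq_left (by linarith)]; ring
    · rw [max_eq_left h, max_eq_right (by linarith)]; ring
  exact hface x hxC _ (hEC hn) (by rw [key]; exact hp)

/-- Proper containment in the fan implies strictly smaller dimension. -/
lemma Fan.dim_lt_of_ssubset {Φ : Fan d} {F C : Set (Vec d)} (hC : C ∈ Φ.cones)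
    (hF : F ∈ Φ.cones) (hFC : F ⊆ C) (hne : F ≠ C) : coneDim F < coneDim C := by
  have hle : Submodule.span ℝ F ≤ Submodule.span ℝ C := Submodule.span_mono hFC
  rcases lt_or_eq_of_le hle with hlt | heq
  · exact Submodule.finrank_lt_finrank_of_lt hlt
  exfalso
  apply hne
  obtain ⟨s, -, hsF⟩ := Φ.isRatCone F hF
  refine le_antisymm hFC ?_
  intro c hc
  -- c lies in the span of s
  have hcs : c ∈ Submodule.span ℝ (↑s : Set (Vec d)) := by
    rw [← span_coneGen, ← hsF, heq]
    exact Submodule.subset_span hc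
  obtain ⟨f, -, hf⟩ := Submodule.mem_span_finset.1 hcs
  set T : ℝ := ∑ v ∈ s, |f v| with hT
  have hT0 : 0 ≤ T := Finset.sum_nonneg fun v _ => abs_nonneg _
  set ε : ℝ := 1 / (1 + T) with hε
  have hεpos : 0 < ε := by positivity
  have hbound : ∀ v ∈ s, 0 ≤ 1 - ε * f v := by
    intro v hv
    have h1 : f v ≤ T := le_trans (le_abs_self _)
      (Finset.single_le_sum (fun w _ => abs_nonneg (f w)) hv)
    have h2 : ε * f v ≤ ε * T := by nlinarith
    have h3 : ε * T < 1 := by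
      rw [hε]; rw [div_mul_eq_mul_div, one_mul, div_lt_one (by linarith)]; linarith
    linarith
  have hf0 : (∑ v ∈ s, (1:ℝ) • v) ∈ F := by
    rw [hsF]; exact ⟨s, fun _ => 1, le_refl _, fun _ => zero_le_one, rfl⟩
  have hg : (∑ v ∈ s, (1 - ε * f v) • v) ∈ F := by
    rw [hsF]
    exact ⟨s, fun v => if v ∈ s then 1 - ε * f v else 0, le_refl _,
      fun v => by dsimp only; split
                  · exact hbound v ‹_›
                  · exact le_refl 0,
      Finset.sum_congr rfl fun v hv => by simp [hv]⟩
  have hsum : (∑ v ∈ s, (1 - ε * f v) • v) + ε • c = ∑ v ∈ s, (1:ℝ) • v := by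
    rw [← hf, Finset.smul_sum, ← Finset.sum_add_distrib]
    refine Finset.sum_congr rfl fun v _ => ?_
    rw [smul_smul, ← add_smul]
    congr 1; ring
  obtain ⟨-, -, hface⟩ := Φ.subset_face C hC F hF hFC
  have hεc : ε • c ∈ F := by
    refine hface (ε • c) (Φ.smul_mem hC hc hεpos.le) _ (hFC hg) ?_
    rw [add_comm, hsum]; exact hf0
  have : ε⁻¹ • (ε • c) ∈ F := by
    rw [hsF] at hεc ⊢
    exact coneGen_smul_mem hεc (by positivity)
  rwa [smul_smul, inv_mul_cancel₀ (ne_of_gt hεpos), one_smul] at this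

lemma coneGen_sum_mem {S : Set (Vec d)} {ι : Type*} {s : Finset ι} {f : ι → Vec d}
    (h : ∀ i ∈ s, f i ∈ coneGen S) : ∑ i ∈ s, f i ∈ coneGen S :=
  Finset.sum_induction f (· ∈ coneGen S) (fun _ _ ha hb => coneGen_add_mem ha hb)
    (coneGen_zero_mem S) h

/-- Maximal proper faces of a cone of the fan have codimension at most one. -/
lemma Fan.facet_dim {Φ : Fan d} {C E : Set (Vec d)} (hC : C ∈ Φ.cones)
    (hE : E ∈ facetsOf (boundaryIn Φ.cones C)) : coneDim C ≤ coneDim E + 1 := by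
  by_contra hcon
  push_neg at hcon
  obtain ⟨⟨hEcones, hEsub, hEne⟩, hmax⟩ := hE
  set W : Submodule ℝ (Vec d) := Submodule.span ℝ E with hW
  obtain ⟨W', hcompl⟩ := Submodule.exists_isCompl W
  set π : Vec d →ₗ[ℝ] Vec d := W'.subtype.comp (W'.linearProjOfIsCompl W hcompl.symm) with hπ
  have hker : LinearMap.ker π = W := by
    rw [hπ, LinearMap.ker_comp, Submodule.ker_subtype]
    show LinearMap.ker _ = W
    exact Submodule.linearProjOfIsCompl_ker hcompl.symm
  have hmemker : ∀ x : Vec d, π x = 0 ↔ x ∈ W := by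
    intro x; rw [← LinearMap.mem_ker, hker]
  have hEW : E = C ∩ ↑W := Fan.face_eq_inter_span hC hEcones hEsub
  obtain ⟨t, htrat, htC⟩ := Φ.isRatCone C hC
  have htsubC : (↑t : Set (Vec d)) ⊆ C := htC ▸ subset_coneGen _
  -- the projected cone
  have hπC2 : ∀ x ∈ C, π x ∈ coneGen ↑(t.image π) := by
    intro x hx
    rw [htC] at hx
    obtain ⟨tt, lam, htt, h0, rfl⟩ := hx
    have hmapeq : π (∑ v ∈ tt, lam v • v) = ∑ v ∈ tt, lam v • π v := by
      rw [map_sum]; exact Finset.sum_congr rfl fun v _ => π.map_smul _ _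
    rw [hmapeq]
    refine ⟨tt.image π, fun u => ∑ w ∈ tt.filter (fun c' => π c' = u), lam w, ?_, ?_, ?_⟩
    · intro u hu
      obtain ⟨v, hv, rfl⟩ := Finset.mem_image.1 (by exact_mod_cast hu)
      exact Finset.mem_coe.2 (Finset.mem_image_of_mem π (by
        exact_mod_cast htt (Finset.mem_coe.2 hv)))
    · exact fun u => Finset.sum_nonneg fun w _ => h0 w
    · refine (Finset.sum_image' (fun v => lam v • π v) ?_).symm
      intro c hc
      rw [Finset.sum_smul]
      exact Finset.sum_congr rfl fun w hw => by
        show lam w • π c = lam w • π w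
        rw [(Finset.mem_filter.1 hw).2]
  -- dimension of the projected cone
  have hWV : W ≤ Submodule.span ℝ C := Submodule.span_mono hEsub
  have hMP : 2 ≤ Module.finrank ℝ
      (Submodule.span ℝ (↑(t.image π) : Set (Vec d))) := by
    have h1 : Submodule.span ℝ (↑(t.image π) : Set (Vec d)) =
        (Submodule.span ℝ C).map π := by
      rw [Finset.coe_image, Submodule.span_image]
      congr 1
      rw [htC, span_coneGen]
    have h2 := LinearMap.finrank_range_add_finrank_ker (π.comp (Submodule.span ℝ C).subtype)
    have h3 : LinearMap.range (π.comp (Submodule.span ℝ C).subtype) =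
        (Submodule.span ℝ C).map π := by
      rw [LinearMap.range_comp, Submodule.range_subtype]
    have h4 : LinearMap.ker (π.comp (Submodule.span ℝ C).subtype) =
        W.comap (Submodule.span ℝ C).subtype := by
      rw [LinearMap.ker_comp, hker]
    have h5 : Module.finrank ℝ (W.comap (Submodule.span ℝ C).subtype) =
        Module.finrank ℝ W := (Submodule.comapSubtypeEquivOfLe hWV).finrank_eq
    rw [h3, h4, h5] at h2
    have hEdim : coneDim E = Module.finrank ℝ W := rfl
    have hCdim : coneDim C = Module.finrank ℝ (Submodule.span ℝ C) := rfl
    rw [h1]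
    omega
  set t2' : Finset (Vec d) := (t.image π).erase 0 with ht2'
  have hne : t2'.Nonempty := by
    rw [Finset.nonempty_iff_ne_empty]
    intro hemp
    have hsub0 : (↑(t.image π) : Set (Vec d)) ⊆ {0} := by
      intro u hu
      by_contra h0
      have : u ∈ t2' := Finset.mem_erase.2 ⟨h0, by exact_mod_cast hu⟩
      simp [hemp] at this
    have := Submodule.span_mono (R := ℝ) hsub0
    rw [Submodule.span_singleton_eq_bot.2 rfl] at this
    have hmono := Submodule.finrank_mono this
    have hb : Module.finrank ℝ (⊥ : Submodule ℝ (Vec d)) = 0 := finrank_bot ℝ (Vec d)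
    omega
  -- 0 is not in the convex hull of the nonzero generators
  have hull0 : (0 : Vec d) ∉ convexHull ℝ (↑t2' : Set (Vec d)) := by
    intro h
    rw [Finset.convexHull_eq] at h
    obtain ⟨w, hw0, hw1, hwc⟩ := h
    rw [Finset.centerMass_eq_of_sum_1 _ _ hw1] at hwc
    simp only [id] at hwc
    have hex : ∃ u0 ∈ t2', 0 < w u0 := by
      by_contra hno
      push_neg at hno
      have : ∑ y ∈ t2', w y = 0 :=
        Finset.sum_eq_zero fun y hy => le_antisymm (hno y hy) (hw0 y hy)
      rw [hw1] at this; norm_num at this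
    obtain ⟨u0, hu0mem, hu0pos⟩ := hex
    have hpre : ∀ u ∈ t2', ∃ v, v ∈ t ∧ π v = u := by
      intro u hu
      obtain ⟨v, hv, hvu⟩ := Finset.mem_image.1 (Finset.mem_of_mem_erase hu)
      exact ⟨v, hv, hvu⟩
    choose! g hgt hgπ using hpre
    set z : Vec d := ∑ u ∈ t2', w u • g u with hz
    have hzC : z ∈ C := by
      rw [htC]
      exact coneGen_sum_mem fun u hu =>
        coneGen_smul_mem (subset_coneGen _ (hgt u hu)) (hw0 u hu)
    have hπz : π z = 0 := by
      rw [hz, map_sum]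
      rw [← hwc]
      refine Finset.sum_congr rfl fun u hu => ?_
      rw [π.map_smul, hgπ u hu]
    have hzE : z ∈ E := by
      rw [hEW]; exact ⟨hzC, (hmemker z).1 hπz⟩
    obtain ⟨-, -, hfaceE⟩ := Φ.subset_face C hC E hEcones hEsub
    have hsplit : w u0 • g u0 + ∑ u ∈ t2'.erase u0, w u • g u = z := by
      rw [hz]
      exact Finset.add_sum_erase t2' (fun u => w u • g u) hu0mem
    have hrest : ∑ u ∈ t2'.erase u0, w u • g u ∈ C := by
      rw [htC]
      exact coneGen_sum_mem fun u hu =>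
        coneGen_smul_mem (subset_coneGen _ (hgt u (Finset.mem_of_mem_erase hu)))
          (hw0 u (Finset.mem_of_mem_erase hu))
    have hmem : w u0 • g u0 ∈ E := by
      refine hfaceE _ (Φ.smul_mem hC (htsubC (hgt u0 hu0mem)) (hw0 u0 hu0mem)) _ hrest ?_
      rw [hsplit]; exact hzE
    have hg0E : g u0 ∈ E := by
      have := Φ.smul_mem hEcones hmem (c := (w u0)⁻¹) (by positivity)
      rwa [smul_smul, inv_mul_cancel₀ (ne_of_gt hu0pos), one_smul] at this
    have : π (g u0) = 0 := (hmemker _).2 (Submodule.subset_span hg0E)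
    rw [hgπ u0 hu0mem] at this
    exact (Finset.mem_erase.1 hu0mem).1 this
  -- separating functional
  obtain ⟨f, c, hfc, hcf⟩ := geometric_hahn_banach_point_closed
    (convex_convexHull ℝ (↑t2' : Set (Vec d)))
    ((t2'.finite_toSet.isCompact_convexHull ℝ).isClosed) hull0
  have hc0 : (0:ℝ) < c := by rw [map_zero] at hfc; exact hfc
  have hpos : ∀ v ∈ t2', 0 < f v := fun v hv =>
    lt_trans hc0 (hcf v (subset_convexHull ℝ _ (Finset.mem_coe.2 hv)))
  -- two generators pointing in different directions
  have hv12 : ∃ v1 ∈ t2', ∃ v2 ∈ t2', f v2 • v1 ≠ f v1 • v2 := by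
    by_contra hcon2
    push_neg at hcon2
    obtain ⟨v1, hv1⟩ := hne
    have hsub1 : (↑(t.image π) : Set (Vec d)) ⊆ ↑(Submodule.span ℝ ({v1} : Set (Vec d))) := by
      intro u hu
      by_cases h0 : u = 0
      · rw [h0]; exact Submodule.zero_mem _
      have hu' : u ∈ t2' := Finset.mem_erase.2 ⟨h0, by exact_mod_cast hu⟩
      have heq := hcon2 v1 hv1 u hu'
      refine (Submodule.mem_span_singleton).2 ⟨(f v1)⁻¹ * f u, ?_⟩
      rw [← smul_smul, heq, smul_smul, inv_mul_cancel₀ (ne_of_gt (hpos v1 hv1)), one_smul]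
    have hlespan := Submodule.finrank_mono (Submodule.span_le.2 hsub1)
    rw [finrank_span_singleton (show v1 ≠ (0:Vec d) from (Finset.mem_erase.1 hv1).1)] at hlespan
    omega
  obtain ⟨v1, hv1, v2, hv2, hv12ne⟩ := hv12
  have hz0 : f v2 • v1 - f v1 • v2 ≠ 0 := sub_ne_zero_of_ne hv12ne
  obtain ⟨i, hi⟩ : ∃ i, (f v2 • v1 - f v1 • v2) i ≠ 0 := by
    by_contra hno
    push_neg at hno
    exact hz0 (funext hno)
  set u : Vec d →ₗ[ℝ] ℝ := LinearMap.proj i with hu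
  have hui : ∀ x : Vec d, u x = x i := fun x => rfl
  have huratio : f v2 * u v1 ≠ f v1 * u v2 := by
    intro hcontra
    apply hi
    show (f v2 • v1) i - (f v1 • v2) i = 0
    have e1 : (f v2 • v1) i = f v2 * v1 i := rfl
    have e2 : (f v1 • v2) i = f v1 * v2 i := rfl
    rw [e1, e2, ← hui v1, ← hui v2, hcontra, sub_self]
  -- the maximum of the ratios
  obtain ⟨v0, hv0mem, hv0⟩ := Finset.exists_mem_eq_sup' hne (fun v => u v / f v)
  set M : ℝ := u v0 / f v0 with hM
  have hsupM : t2'.sup' hne (fun v => u v / f v) = M := hv0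
  have hratio : ∀ v ∈ t2', u v ≤ M * f v := by
    intro v hv
    have h1 : u v / f v ≤ t2'.sup' hne (fun v => u v / f v) := Finset.le_sup' (fun v => u v / f v) hv
    rw [hsupM] at h1
    exact (div_le_iff₀ (hpos v hv)).1 h1
  set u' : Vec d →ₗ[ℝ] ℝ := M • (f : Vec d →L[ℝ] ℝ).toLinearMap - u with hu'
  have hu'app : ∀ x : Vec d, u' x = M * f x - u x := by
    intro x
    simp [hu', smul_eq_mul]
  have hu'gen : ∀ v ∈ t.image π, 0 ≤ u' v := by
    intro v hv
    by_cases h0 : v = 0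
    · rw [h0, map_zero]
    · have : v ∈ t2' := Finset.mem_erase.2 ⟨h0, hv⟩
      rw [hu'app]
      linarith [hratio v this]
  have hu'C2 : ∀ x ∈ coneGen (↑(t.image π) : Set (Vec d)), 0 ≤ u' x := by
    rintro x ⟨tt, lam, htt, h0, rfl⟩
    rw [map_sum]
    refine Finset.sum_nonneg fun v hv => ?_
    rw [u'.map_smul, smul_eq_mul]
    exact mul_nonneg (h0 v) (hu'gen v (by exact_mod_cast htt (Finset.mem_coe.2 hv)))
  have hu'v0 : u' v0 = 0 := by
    have : u v0 = M * f v0 := by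
      rw [hM, div_mul_cancel₀ _ (ne_of_gt (hpos v0 hv0mem))]
    rw [hu'app, this, sub_self]
  -- the new face
  set F : Set (Vec d) := {x | x ∈ C ∧ u' (π x) = 0} with hF
  have hFsub : F ⊆ C := fun x hx => hx.1
  have hπmem : ∀ x ∈ C, 0 ≤ u' (π x) := fun x hx => hu'C2 _ (hπC2 x hx)
  have hFadd : ∀ x ∈ C, ∀ y ∈ C, x + y ∈ F → x ∈ F := by
    intro x hx y hy hxy
    have h1 : u' (π (x + y)) = 0 := hxy.2
    rw [π.map_add, u'.map_add] at h1
    have h2 := hπmem x hx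
    have h3 := hπmem y hy
    exact ⟨hx, by linarith⟩
  have hFrat : IsRatCone F := by
    refine ⟨t.filter (· ∈ F), fun v hv => htrat v (Finset.mem_of_mem_filter v hv), ?_⟩
    apply le_antisymm
    · intro x hx
      have hxC := hx.1
      rw [htC] at hxC
      obtain ⟨tt, lam, htt, h0, hrep⟩ := hxC
      have hmemgen : ∀ v ∈ tt, lam v ≠ 0 → v ∈ F := by
        intro v hv hlamv
        have hterm : ∀ w ∈ tt, 0 ≤ lam w * u' (π w) := fun w hw =>
          mul_nonneg (h0 w) (hπmem w (htsubC (htt (Finset.mem_coe.2 hw))))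
        have hsum0 : ∑ w ∈ tt, lam w * u' (π w) = 0 := by
          have : u' (π x) = 0 := hx.2
          rw [hrep, map_sum, map_sum] at this
          rw [← this]
          exact Finset.sum_congr rfl fun w _ => by rw [π.map_smul, u'.map_smul, smul_eq_mul]
        have := (Finset.sum_eq_zero_iff_of_nonneg hterm).1 hsum0 v hv
        have hu'v : u' (π v) = 0 := by
          rcases mul_eq_zero.1 this with h | h
          · exact absurd h hlamv
          · exact h
        exact ⟨htsubC (htt (Finset.mem_coe.2 hv)), hu'v⟩
      refine ⟨tt.filter (· ∈ F), lam, ?_, h0, ?_⟩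
      · intro v hv
        have hv' := Finset.mem_filter.1 (by exact_mod_cast hv)
        exact Finset.mem_coe.2 (Finset.mem_filter.2 ⟨htt (Finset.mem_coe.2 hv'.1), hv'.2⟩)
      · rw [hrep]
        refine (Finset.sum_filter_of_ne ?_).symm
        intro v hv hne0
        refine hmemgen v hv fun h => hne0 ?_
        rw [h, zero_smul]
    · refine coneGen_subset_of_closed ?_ ?_ ?_ ?_
      · intro v hv
        exact (Finset.mem_filter.1 (by exact_mod_cast hv)).2
      · exact ⟨Φ.zero_mem hC, by rw [map_zero, map_zero]⟩
      · intro x hx y hy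
        refine ⟨Φ.add_mem hC hx.1 hy.1, ?_⟩
        rw [π.map_add, u'.map_add, hx.2, hy.2, add_zero]
      · intro x hx cc hcc
        refine ⟨Φ.smul_mem hC hx.1 hcc, ?_⟩
        rw [π.map_smul, u'.map_smul, hx.2, smul_zero]
  have hFcones : F ∈ Φ.cones := Φ.face_mem C hC F ⟨hFsub, hFrat, hFadd⟩
  have hEF : E ⊆ F := by
    intro e he
    refine ⟨hEsub he, ?_⟩
    rw [(hmemker e).2 (Submodule.subset_span he), map_zero]
  have hFneC : F ≠ C := by
    have hρne : u v1 / f v1 ≠ u v2 / f v2 := by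
      intro hcontra
      apply huratio
      field_simp [ne_of_gt (hpos v1 hv1), ne_of_gt (hpos v2 hv2)] at hcontra
      linarith [hcontra]
    have hle1 : u v1 / f v1 ≤ M := by
      have h1 : u v1 / f v1 ≤ t2'.sup' hne (fun v => u v / f v) := Finset.le_sup' (fun v => u v / f v) hv1
      rwa [hsupM] at h1
    have hle2 : u v2 / f v2 ≤ M := by
      have h1 : u v2 / f v2 ≤ t2'.sup' hne (fun v => u v / f v) := Finset.le_sup' (fun v => u v / f v) hv2
      rwa [hsupM] at h1
    have hsome : ∃ vb ∈ t2', u vb / f vb < M := by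
      rcases lt_or_eq_of_le hle1 with h | h
      · exact ⟨v1, hv1, h⟩
      · refine ⟨v2, hv2, lt_of_le_of_ne hle2 ?_⟩
        intro h2
        exact hρne (by rw [h, h2])
    obtain ⟨vb, hvb, hvbM⟩ := hsome
    have hub : 0 < u' vb := by
      rw [hu'app]
      have := (div_lt_iff₀ (hpos vb hvb)).1 hvbM
      linarith
    obtain ⟨wb, hwb, hwbπ⟩ := Finset.mem_image.1 (Finset.mem_of_mem_erase hvb)
    intro hFC
    have hmemF : wb ∈ F := by rw [hFC]; exact htsubC hwb
    have h2 : u' (π wb) = 0 := hmemF.2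
    rw [hwbπ] at h2
    exact absurd h2 (ne_of_gt hub)
  have hFneE : F ≠ E := by
    obtain ⟨w0, hw0, hw0π⟩ := Finset.mem_image.1 (Finset.mem_of_mem_erase hv0mem)
    have hw0F : w0 ∈ F := ⟨htsubC hw0, by rw [hw0π]; exact hu'v0⟩
    intro hFE
    rw [hFE] at hw0F
    have : π w0 = 0 := (hmemker _).2 (Submodule.subset_span hw0F)
    rw [hw0π] at this
    exact (Finset.mem_erase.1 hv0mem).1 this
  have := hmax F ⟨hFcones, hFsub, hFneC⟩ hEF
  exact hFneE this

/-! ### Auxiliary combinatorial lemmas -/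

set_option maxHeartbeats 1000000

open Classical

variable {d : ℕ}

/-- Any shelling enumerates the facets without repetitions. -/
lemma IsShelling.nodup_and_facets {Φ : Fan d} {S : Set (Set (Vec d))}
    {L : List (Set (Vec d))} (h : IsShelling Φ S L) :
    L.Nodup ∧ {C | C ∈ L} = facetsOf S := by
  cases h with
  | base _ _ h1 h2 _ => exact ⟨h1, h2⟩
  | step _ _ _ _ _ h1 h2 _ _ _ => exact ⟨h1, h2⟩

/-- In a fan of dimension 0, every cone has dimension 0. -/
lemma coneDim_eq_zero_of_fanSetDim_zero {Φ : Fan d} (h : fanSetDim Φ.cones = 0)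
    {C : Set (Vec d)} (hC : C ∈ Φ.cones) : coneDim C = 0 := by
  have hb : BddAbove (coneDim '' Φ.cones) := (Φ.finite.image coneDim).bddAbove
  have := le_csSup hb (Set.mem_image_of_mem coneDim hC)
  have h0 : sSup (coneDim '' Φ.cones) = 0 := h
  omega

/-- `E ∈ facetsOf (∂y)` cannot be contained in a facet of strictly smaller dimension. -/
lemma not_bdryFacet_subset {Φ : Fan d} {x y E : Set (Vec d)}
    (hx : x ∈ facetsOf Φ.cones) (hy : y ∈ facetsOf Φ.cones)
    (hdim : coneDim x < coneDim y)
    (hE : E ∈ facetsOf (boundaryIn Φ.cones y)) (hEx : E ⊆ x) : False := by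
  obtain ⟨hEc, hEy, hEney⟩ := hE.1
  by_cases hExeq : E = x
  · subst hExeq
    exact hEney (hx.2 y hy.1 hEy).symm
  · have h1 : coneDim E < coneDim x := Fan.dim_lt_of_ssubset hx.1 hEc hEx hExeq
    have h2 : coneDim y ≤ coneDim E + 1 := Fan.facet_dim hy.1 hE
    omega

/-- The unique prefix before the first occurrence of `C`. -/
noncomputable def preOf {α : Type*} (C : α) : List α → List α
  | [] => []
  | a :: l => if a = C then [] else a :: preOf C l

lemma preOf_eq {α : Type*} {C : α} :
    ∀ {pre L post : List α}, L.Nodup → L = pre ++ C :: post → preOf C L = pre := by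
  intro pre
  induction pre with
  | nil =>
    intro L post _ hd
    subst hd
    simp [preOf]
  | cons a pre' ih =>
    intro L post h hd
    subst hd
    have hmem : C ∈ pre' ++ C :: post := by simp
    have ha : a ≠ C := by
      intro heq
      subst heq
      exact (List.nodup_cons.1 h).1 hmem
    have htail : (pre' ++ C :: post).Nodup := (List.nodup_cons.1 h).2
    simp only [List.cons_append, preOf, if_neg ha]
    congr 1
    exact ih htail rfl

lemma decomp_unique {α : Type*} {L p1 p2 s1 s2 : List α} {C : α} (h : L.Nodup)
    (h1 : L = p1 ++ C :: s1) (h2 : L = p2 ++ C :: s2) : p1 = p2 ∧ s1 = s2 := by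
  have e1 := preOf_eq h h1
  have e2 := preOf_eq h h2
  have hp : p1 = p2 := e1.symm.trans e2
  subst hp
  have := h1.symm.trans h2
  have := List.append_cancel_left this
  exact ⟨rfl, by injection this⟩

/-- Count of inversions wrt decreasing cone dimension. -/
noncomputable def invC : List (Set (Vec d)) → ℕ
  | [] => 0
  | C :: l => l.countP (fun D => decide (coneDim C < coneDim D)) + invC l

lemma invC_swap_lt {x y : Set (Vec d)} (h : coneDim x < coneDim y) :
    ∀ (A : List (Set (Vec d))) (B : List (Set (Vec d))),
      invC (A ++ y :: x :: B) < invC (A ++ x :: y :: B) := by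
  intro A
  induction A with
  | nil =>
    intro B
    simp only [List.nil_append, invC, List.countP_cons]
    have h1 : decide (coneDim x < coneDim y) = true := by simpa using h
    have h2 : decide (coneDim y < coneDim x) = false := by
      simp only [decide_eq_false_iff_not]
      omega
    rw [h1, h2]
    norm_num
    omega
  | cons a A ih =>
    intro B
    have key := ih B
    simp only [List.cons_append, invC, List.countP_append, List.countP_cons,
      List.append_eq]
    omega

/-- Either sorted by weakly decreasing dimension, or it has an adjacent inversion. -/
lemma sorted_or_inversion (L : List (Set (Vec d))) :
    L.Pairwise (fun C D => coneDim D ≤ coneDim C) ∨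
    ∃ A x y B, L = A ++ x :: y :: B ∧ coneDim x < coneDim y := by
  induction L with
  | nil => exact Or.inl (List.Pairwise.nil)
  | cons a L ih =>
    cases L with
    | nil => exact Or.inl (List.pairwise_singleton _ a)
    | cons b L' =>
      by_cases hab : coneDim a < coneDim b
      · exact Or.inr ⟨[], a, b, L', rfl, hab⟩
      rcases ih with hs | ⟨A, x, y, B, heq, hxy⟩
      · left
        rw [List.pairwise_cons]
        refine ⟨?_, hs⟩
        intro c hc
        rcases List.mem_cons.1 hc with rfl | hc'
        · omega
        · have := (List.pairwise_cons.1 hs).1 c hc'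
          omega
      · exact Or.inr ⟨a :: A, x, y, B, by rw [heq]; rfl, hxy⟩

lemma mem_facesIn {S : Set (Set (Vec d))} {C G : Set (Vec d)} :
    G ∈ facesIn S C ↔ G ∈ S ∧ G ⊆ C := Iff.rfl

/-- Key lemma: a common face of `x` and `y` with `dim x < dim y`, where `x` occurs among
the predecessors of `y`, is already a face of an earlier predecessor. -/
lemma drop_small_pred {Φ : Fan d} {A : List (Set (Vec d))} {x y : Set (Vec d)}
    {Dy : List (Set (Vec d))} {ry : ℕ}
    (hx : x ∈ facetsOf Φ.cones) (hy : y ∈ facetsOf Φ.cones)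
    (hdim : coneDim x < coneDim y)
    (hDy : IsShelling Φ (boundaryIn Φ.cones y) Dy)
    (hEq : (⋃ C' ∈ {z | z ∈ A ++ [x]}, (facesIn Φ.cones C' ∩ facesIn Φ.cones y)) =
      ⋃ D' ∈ {z | z ∈ Dy.take ry}, facesIn Φ.cones D') :
    ∀ G ∈ facesIn Φ.cones x ∩ facesIn Φ.cones y,
      ∃ C' ∈ {z | z ∈ A}, G ∈ facesIn Φ.cones C' ∩ facesIn Φ.cones y := by
  intro G hG
  have hGmem : G ∈ ⋃ C' ∈ {z | z ∈ A ++ [x]},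
      (facesIn Φ.cones C' ∩ facesIn Φ.cones y) := by
    refine Set.mem_biUnion ?_ hG
    show x ∈ A ++ [x]
    simp
  rw [hEq] at hGmem
  simp only [Set.mem_iUnion, exists_prop] at hGmem
  obtain ⟨D', hD'take, hGD'⟩ := hGmem
  have hsetD := hDy.nodup_and_facets.2
  have hD'fac : D' ∈ facetsOf (boundaryIn Φ.cones y) := by
    rw [← hsetD]
    exact (List.take_subset _ _) hD'take
  have hD'bd := hD'fac.1
  have hD'self : D' ∈ ⋃ D'' ∈ {z | z ∈ Dy.take ry}, facesIn Φ.cones D'' :=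
    Set.mem_biUnion hD'take ⟨hD'bd.1, subset_rfl⟩
  rw [← hEq] at hD'self
  simp only [Set.mem_iUnion, exists_prop] at hD'self
  obtain ⟨C', hC'mem, hD'C'⟩ := hD'self
  rcases List.mem_append.1 hC'mem with hC'A | hC'x
  · exact ⟨C', hC'A, ⟨⟨hG.1.1, hGD'.2.trans hD'C'.1.2⟩, hG.2⟩⟩
  · have hCx : C' = x := by simpa using hC'x
    subst hCx
    exact (not_bdryFacet_subset hx hy hdim hD'fac hD'C'.1.2).elim

/-- The predecessor list of a facet of larger dimension cannot consist of `x` alone. -/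
lemma pred_ne_nil {Φ : Fan d} {A : List (Set (Vec d))} {x y : Set (Vec d)}
    {Dy : List (Set (Vec d))} {ry : ℕ}
    (hx : x ∈ facetsOf Φ.cones) (hy : y ∈ facetsOf Φ.cones)
    (hdim : coneDim x < coneDim y)
    (hDy : IsShelling Φ (boundaryIn Φ.cones y) Dy)
    (hEq : (⋃ C' ∈ {z | z ∈ A ++ [x]}, (facesIn Φ.cones C' ∩ facesIn Φ.cones y)) =
      ⋃ D' ∈ {z | z ∈ Dy.take ry}, facesIn Φ.cones D')
    (hne : (⋃ C' ∈ {z | z ∈ A ++ [x]},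
      (facesIn Φ.cones C' ∩ facesIn Φ.cones y)).Nonempty) : A ≠ [] := by
  obtain ⟨G, hG⟩ := hne
  simp only [Set.mem_iUnion, exists_prop] at hG
  obtain ⟨C', hC', hGC'⟩ := hG
  intro hA
  subst hA
  have hCx : C' = x := by simpa using hC'
  subst hCx
  obtain ⟨C'', hC'', -⟩ := drop_small_pred hx hy hdim hDy hEq G hGC'
  simp at hC''

/-- Swapping an adjacent out-of-order pair preserves the shelling property. -/
lemma swap_shelling {Φ : Fan d} {A B : List (Set (Vec d))} {x y : Set (Vec d)}
    (hdim : coneDim x < coneDim y)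
    (hL : IsShelling Φ Φ.cones (A ++ x :: y :: B)) :
    IsShelling Φ Φ.cones (A ++ y :: x :: B) := by
  have hperm : (A ++ x :: y :: B).Perm (A ++ y :: x :: B) :=
    List.Perm.append_left A (List.Perm.swap y x B)
  cases hL with
  | base _ _ h1 h2 h3 =>
    exfalso
    have hxf : x ∈ facetsOf Φ.cones := by rw [← h2]; simp
    have hyf : y ∈ facetsOf Φ.cones := by rw [← h2]; simp
    have e1 := coneDim_eq_zero_of_fanSetDim_zero h3 hxf.1
    have e2 := coneDim_eq_zero_of_fanSetDim_zero h3 hyf.1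
    omega
  | step _ _ Bf Df rf h1 h2 h3 h4 h5 =>
    have hxf : x ∈ facetsOf Φ.cones := by rw [← h2]; simp
    have hyf : y ∈ facetsOf Φ.cones := by rw [← h2]; simp
    have hnd2 : (A ++ y :: x :: B).Nodup := hperm.nodup_iff.1 h1
    have hset2 : {C | C ∈ A ++ y :: x :: B} = facetsOf Φ.cones := by
      have hsets : {C | C ∈ A ++ y :: x :: B} = {C | C ∈ A ++ x :: y :: B} :=
        Set.ext fun z => hperm.mem_iff.symm
      rw [hsets, h2]
    -- old data at y
    have hydecomp : A ++ x :: y :: B = (A ++ [x]) ++ y :: B := by simp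
    have h5y := h5 (A ++ [x]) y B hydecomp (by simp)
    have hDy := h4 (A ++ [x]) y B hydecomp (by simp)
    obtain ⟨h5y1, h5y2, h5y3, h5y4⟩ := h5y
    have hAne : A ≠ [] := pred_ne_nil hxf hyf hdim hDy h5y4 h5y3
    have hE0 := drop_small_pred hxf hyf hdim hDy h5y4
    -- Γ_y over A equals Γ_y over A ++ [x]
    have hE1 : (⋃ C' ∈ {z | z ∈ A}, (facesIn Φ.cones C' ∩ facesIn Φ.cones y)) =
        ⋃ C' ∈ {z | z ∈ A ++ [x]}, (facesIn Φ.cones C' ∩ facesIn Φ.cones y) := by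
      apply Set.Subset.antisymm
      · exact Set.biUnion_subset_biUnion_left (fun z hz => by simp [List.mem_append]; tauto)
      · intro G hG
        simp only [Set.mem_iUnion, exists_prop] at hG
        obtain ⟨C', hC', hGC'⟩ := hG
        rcases List.mem_append.1 hC' with h | h
        · exact Set.mem_biUnion h hGC'
        · have hCx : C' = x := by simpa using h
          subst hCx
          obtain ⟨C'', hC'', hG2⟩ := hE0 G hGC'
          exact Set.mem_biUnion hC'' hG2
    -- old data at x
    have h5x := h5 A x (y :: B) rfl hAne
    have hDx := h4 A x (y :: B) rfl hAne
    obtain ⟨h5x1, h5x2, h5x3, h5x4⟩ := h5x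
    -- Γ_x over A ++ [y] equals Γ_x over A
    have hE2 : (⋃ C' ∈ {z | z ∈ A ++ [y]}, (facesIn Φ.cones C' ∩ facesIn Φ.cones x)) =
        ⋃ C' ∈ {z | z ∈ A}, (facesIn Φ.cones C' ∩ facesIn Φ.cones x) := by
      apply Set.Subset.antisymm
      · intro G hG
        simp only [Set.mem_iUnion, exists_prop] at hG
        obtain ⟨C', hC', hGC'⟩ := hG
        rcases List.mem_append.1 hC' with h | h
        · exact Set.mem_biUnion h hGC'
        · have hCy : C' = y := by simpa using h
          subst hCy
          obtain ⟨C'', hC'', hG2⟩ := hE0 G ⟨hGC'.2, hGC'.1⟩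
          exact Set.mem_biUnion hC'' ⟨hG2.1, hGC'.2⟩
      · exact Set.biUnion_subset_biUnion_left (fun z hz => by simp [List.mem_append]; tauto)
    refine IsShelling.step Φ.cones (A ++ y :: x :: B) Bf
      (fun _ C => Df (preOf C (A ++ x :: y :: B)) C)
      (fun _ C => rf (preOf C (A ++ x :: y :: B)) C)
      hnd2 hset2 ?_ ?_ ?_
    · -- head condition
      intro C rest hdecomp
      cases A with
      | nil => exact absurd rfl hAne
      | cons a A' =>
        rw [List.cons_append] at hdecomp
        injection hdecomp with ha hrest
        subst ha
        exact h3 a (A' ++ x :: y :: B) (by rw [List.cons_append])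
    · -- the boundary shellings
      intro pre C post hdecomp hprene
      have hCL2 : C ∈ A ++ y :: x :: B := by rw [hdecomp]; simp
      have hCL : C ∈ A ++ x :: y :: B := hperm.mem_iff.2 hCL2
      obtain ⟨p, q, hpq⟩ := List.append_of_mem hCL
      beta_reduce
      rw [preOf_eq h1 hpq]
      by_cases hp : p = []
      · exfalso
        subst hp
        rw [List.nil_append] at hpq
        cases A with
        | nil => exact hAne rfl
        | cons a A' =>
          rw [List.cons_append] at hpq
          injection hpq with ha hq
          subst ha
          have : pre = [] ∧ post = A' ++ y :: x :: B :=
            decomp_unique hnd2 hdecomp (by rw [List.cons_append, List.nil_append])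
          exact hprene this.1
      · exact h4 p C q hpq hp
    · -- the main condition
      intro pre C post hdecomp hprene
      have hCL2 : C ∈ A ++ y :: x :: B := by rw [hdecomp]; simp
      rcases List.mem_append.1 hCL2 with hCA | hCyx
      · -- C occurs in A
        obtain ⟨A1, A2, hA⟩ := List.append_of_mem hCA
        subst hA
        have hdecompL : (A1 ++ C :: A2) ++ x :: y :: B = A1 ++ C :: (A2 ++ x :: y :: B) := by
          simp
        have hdecompL2 : (A1 ++ C :: A2) ++ y :: x :: B = A1 ++ C :: (A2 ++ y :: x :: B) := by
          simp
        obtain ⟨hpre, hpost⟩ := decomp_unique hnd2 hdecomp hdecompL2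
        subst hpre
        beta_reduce
        rw [preOf_eq h1 hdecompL]
        exact h5 pre C (A2 ++ x :: y :: B) hdecompL hprene
      · rcases List.mem_cons.1 hCyx with hCy | hCrest
        · -- C = y, new predecessors are A
          subst hCy
          obtain ⟨hpre, hpost⟩ := decomp_unique hnd2 hdecomp rfl
          subst hpre
          beta_reduce
          rw [preOf_eq h1 hydecomp]
          exact ⟨h5y1, h5y2, by rw [hE1]; exact h5y3, by rw [hE1]; exact h5y4⟩
        rcases List.mem_cons.1 hCrest with hCx | hCB
        · -- C = x, new predecessors are A ++ [y]
          subst hCx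
          have hdecompL2 : A ++ y :: C :: B = (A ++ [y]) ++ C :: B := by simp
          obtain ⟨hpre, hpost⟩ := decomp_unique hnd2 hdecomp hdecompL2
          subst hpre
          beta_reduce
          rw [preOf_eq h1 rfl]
          exact ⟨h5x1, h5x2, by rw [hE2]; exact h5x3, by rw [hE2]; exact h5x4⟩
        · -- C occurs in B
          obtain ⟨B1, B2, hB⟩ := List.append_of_mem hCB
          subst hB
          have hdecompL : A ++ x :: y :: (B1 ++ C :: B2) = (A ++ x :: y :: B1) ++ C :: B2 := by
            simp
          have hdecompL2 : A ++ y :: x :: (B1 ++ C :: B2) = (A ++ y :: x :: B1) ++ C :: B2 := by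
            simp
          obtain ⟨hpre, hpost⟩ := decomp_unique hnd2 hdecomp hdecompL2
          subst hpre
          beta_reduce
          rw [preOf_eq h1 hdecompL]
          have hold := h5 (A ++ x :: y :: B1) C B2 hdecompL (by simp)
          have hsets : {z | z ∈ A ++ y :: x :: B1} = {z | z ∈ A ++ x :: y :: B1} := by
            ext z
            simp only [Set.mem_setOf_eq, List.mem_append, List.mem_cons]
            tauto
          rw [hsets]
          exact hold

/-- If `C₁, ..., C_s` is a (non-pure) shelling of the rational pointed fan
`Φ`, then some permutation of it is again a shelling of `Φ` in which the dimensions of the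
facets are weakly decreasing. -/
theorem exists_dimension_sorted_shelling
    {d : ℕ} (Φ : Fan d) (L : List (Set (Vec d))) (hL : IsShelling Φ Φ.cones L) :
    ∃ L' : List (Set (Vec d)), L'.Perm L ∧ IsShelling Φ Φ.cones L' ∧
      L'.Pairwise (fun C D => coneDim D ≤ coneDim C) := by
  suffices h : ∀ (n : ℕ) (L : List (Set (Vec d))), invC L = n → IsShelling Φ Φ.cones L →
      ∃ L' : List (Set (Vec d)), L'.Perm L ∧ IsShelling Φ Φ.cones L' ∧
        L'.Pairwise (fun C D => coneDim D ≤ coneDim C) from h _ L rfl hL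
  intro n
  induction n using Nat.strong_induction_on with
  | _ n ih =>
    intro L hn hL
    rcases sorted_or_inversion L with hs | ⟨A, x, y, B, rfl, hxy⟩
    · exact ⟨L, List.Perm.refl L, hL, hs⟩
    · have hL2 := swap_shelling hxy hL
      have hlt : invC (A ++ y :: x :: B) < n := hn ▸ invC_swap_lt hxy A B
      obtain ⟨L', hp, hsh, hsort⟩ := ih _ hlt _ rfl hL2
      exact ⟨L', hp.trans (List.Perm.append_left A (List.Perm.swap x y B)), hsh, hsort⟩
end

section
/- Let Σ be a rational pointed fan in R^d that is the union of subfans Σ_1, Σ_2, and M_Σ a monoidal complex supported by Σ. Then q_{Σ_1} ∩ q_{Σ_2} = (0) and q_{Σ_1} + q_{Σ_2} = q_{Σ_1 ∩ Σ_2} in K[M_Σ], and consequently the sequence 0 → K[M_Σ] → K[M_{Σ_1}] ⊕ K[M_{Σ_2}] → K[M_{Σ_1∩Σ_2}] → 0 (with maps a ↦ (ā, −ā) and (ā, b̄) ↦ (a+b)‾) is exact. -/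
set_option synthInstance.maxHeartbeats 1000000
set_option maxHeartbeats 2000000

open RingTheory.Sequence

noncomputable section MVAux

open MvPolynomial Finsupp

namespace MVAux

variable {d : ℕ}

lemma latt_add (a b : Fin d → ℤ) : latt (a + b) = latt a + latt b := by
  funext i; simp [latt]

lemma latt_zero : latt (0 : Fin d → ℤ) = 0 := by
  funext i; simp [latt]

/-- `latt` as an additive monoid hom. -/
def lattHom : (Fin d → ℤ) →+ Vec d where
  toFun := latt
  map_zero' := latt_zero
  map_add' := latt_add

lemma coneGen_zero (S : Set (Vec d)) : 0 ∈ coneGen S :=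
  ⟨∅, fun _ => 0, by simp⟩

lemma coneGen_add {S : Set (Vec d)} {x y : Vec d} (hx : x ∈ coneGen S) (hy : y ∈ coneGen S) :
    x + y ∈ coneGen S := by
  obtain ⟨t₁, l₁, ht₁, hl₁, rfl⟩ := hx
  obtain ⟨t₂, l₂, ht₂, hl₂, rfl⟩ := hy
  refine ⟨t₁ ∪ t₂, fun v => (if v ∈ t₁ then l₁ v else 0) + (if v ∈ t₂ then l₂ v else 0),
    ?_, ?_, ?_⟩
  · intro v hv
    rcases Finset.mem_union.1 (by exact_mod_cast hv) with h | h
    · exact ht₁ h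
    · exact ht₂ h
  · intro v
    have := hl₁ v; have := hl₂ v
    positivity
  · have h1 : ∀ (t : Finset (Vec d)) (l : Vec d → ℝ), t ⊆ t₁ ∪ t₂ →
        (∑ v ∈ t₁ ∪ t₂, (if v ∈ t then l v else 0) • v) = ∑ v ∈ t, l v • v := by
      intro t l hsub
      simp only [ite_smul, zero_smul]
      rw [Finset.sum_ite_mem, Finset.inter_comm, Finset.inter_eq_left.2 hsub]
    rw [Finset.sum_congr rfl (fun v _ => add_smul _ _ _), Finset.sum_add_distrib,
      h1 t₁ l₁ Finset.subset_union_left, h1 t₂ l₂ Finset.subset_union_right]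

lemma coneGen_nsmul {S : Set (Vec d)} {x : Vec d} (hx : x ∈ coneGen S) (n : ℕ) :
    n • x ∈ coneGen S := by
  induction n with
  | zero => simpa using coneGen_zero S
  | succ n ih => rw [succ_nsmul]; exact coneGen_add ih hx

variable {Φ : Fan d} (M : MonoidalComplex Φ)

lemma inter_mem_cones {C D : Set (Vec d)} (hC : C ∈ Φ.cones) (hD : D ∈ Φ.cones) :
    C ∩ D ∈ Φ.cones :=
  Φ.face_mem C hC (C ∩ D) (Φ.inter_face C hC D hD).1

include M

lemma mem_cone_of_mem_mon {C : Set (Vec d)} (hC : C ∈ Φ.cones) {a : Fin d → ℤ}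
    (ha : a ∈ M.mon C) : latt a ∈ C := by
  rw [← M.cone_eq C hC]
  refine ⟨{latt a}, fun v => if v = latt a then 1 else 0, ?_, ?_, ?_⟩
  · intro v hv
    simp only [Finset.coe_singleton, Set.mem_singleton_iff] at hv
    exact ⟨a, ha, hv.symm⟩
  · intro v; dsimp only; split <;> norm_num
  · simp

lemma cone_zero {C : Set (Vec d)} (hC : C ∈ Φ.cones) : (0 : Vec d) ∈ C := by
  rw [← M.cone_eq C hC]; exact coneGen_zero _

lemma cone_add {C : Set (Vec d)} (hC : C ∈ Φ.cones) {x y : Vec d} (hx : x ∈ C) (hy : y ∈ C) :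
    x + y ∈ C := by
  rw [← M.cone_eq C hC] at *; exact coneGen_add hx hy

lemma cone_nsmul {C : Set (Vec d)} (hC : C ∈ Φ.cones) {x : Vec d} (hx : x ∈ C) (n : ℕ) :
    n • x ∈ C := by
  rw [← M.cone_eq C hC] at *; exact coneGen_nsmul hx n

lemma cone_sum {C : Set (Vec d)} (hC : C ∈ Φ.cones) {ι : Type*} {t : Finset ι} {f : ι → Vec d}
    (hf : ∀ i ∈ t, f i ∈ C) : (∑ i ∈ t, f i) ∈ C := by
  classical
  induction t using Finset.induction_on with
  | empty => simpa using cone_zero M hC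
  | @insert a s ha ih =>
    rw [Finset.sum_insert ha]
    exact cone_add M hC (hf a (Finset.mem_insert_self a s))
      (ih fun i hi => hf i (Finset.mem_insert_of_mem hi))

lemma mem_mon_inter {C D : Set (Vec d)} (hC : C ∈ Φ.cones) (hD : D ∈ Φ.cones)
    {a : Fin d → ℤ} (ha : a ∈ M.mon C) (hla : latt a ∈ D) : a ∈ M.mon (C ∩ D) := by
  have h := M.compat C hC (C ∩ D) (inter_mem_cones hC hD) Set.inter_subset_left
  have : a ∈ (M.mon (C ∩ D) : Set (Fin d → ℤ)) := by
    rw [h]; exact ⟨ha, mem_cone_of_mem_mon M hC ha, hla⟩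
  exact this

lemma mon_inter_subset_right {C D : Set (Vec d)} (hC : C ∈ Φ.cones) (hD : D ∈ Φ.cones)
    {a : Fin d → ℤ} (ha : a ∈ M.mon (C ∩ D)) : a ∈ M.mon D := by
  have h := M.compat D hD (C ∩ D) (inter_mem_cones hC hD) Set.inter_subset_right
  have : a ∈ (M.mon (C ∩ D) : Set (Fin d → ℤ)) := ha
  rw [h] at this
  exact this.1

/-- Elements of a cone summing into a face `C ∩ D` all lie in the face. -/
lemma face_sum {C D : Set (Vec d)} (hC : C ∈ Φ.cones) (hD : D ∈ Φ.cones)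
    {ι : Type*} {t : Finset ι} {f : ι → Vec d} (hf : ∀ i ∈ t, f i ∈ C)
    (hsum : (∑ i ∈ t, f i) ∈ C ∩ D) : ∀ i ∈ t, f i ∈ C ∩ D := by
  classical
  have hface := (Φ.inter_face C hC D hD).1.2.2
  induction t using Finset.induction_on with
  | empty => simp
  | @insert a s ha ih =>
    rw [Finset.sum_insert ha] at hsum
    have hfa : f a ∈ C := hf a (Finset.mem_insert_self a s)
    have hfs : (∑ i ∈ s, f i) ∈ C := cone_sum M hC fun i hi => hf i (Finset.mem_insert_of_mem hi)
    have h1 : f a ∈ C ∩ D := hface (f a) hfa _ hfs hsum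
    have h2 : (∑ i ∈ s, f i) ∈ C ∩ D := by
      rw [add_comm] at hsum
      exact hface _ hfs (f a) hfa hsum
    intro i hi
    rcases Finset.mem_insert.1 hi with rfl | hi
    · exact h1
    · exact ih (fun j hj => hf j (Finset.mem_insert_of_mem hj)) h2 i hi

end MVAux

end MVAux
noncomputable section MVAux2

open MvPolynomial Finsupp

namespace MVAux

variable {d : ℕ}

/-- The exponent vectors of monomials. -/
abbrev Exp (d : ℕ) := (Fin d → ℤ) →₀ ℕ

/-- The total lattice point of an exponent vector. -/
def Tot (m : Exp d) : Fin d → ℤ := m.sum fun a n => n • a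

lemma Tot_add (m₁ m₂ : Exp d) : Tot (m₁ + m₂) = Tot m₁ + Tot m₂ :=
  Finsupp.sum_add_index' (fun a => zero_smul ℕ a) (fun a n₁ n₂ => add_smul n₁ n₂ a)

lemma Tot_single (a : Fin d → ℤ) (n : ℕ) : Tot (Finsupp.single a n) = n • a :=
  Finsupp.sum_single_index (zero_smul ℕ a)

lemma Tot_single_one (a : Fin d → ℤ) : Tot (Finsupp.single a 1) = a := by
  rw [Tot_single, one_smul]

lemma Tot_zero : Tot (0 : Exp d) = 0 := Finsupp.sum_zero_index

variable {Φ : Fan d} (M : MonoidalComplex Φ)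

/-- Compatibility of an exponent vector: its support lies in a single monoid. -/
def Cmp (m : Exp d) : Prop := ∃ C ∈ Φ.cones, ∀ a ∈ m.support, a ∈ M.mon C

lemma Tot_mem_mon {C : Set (Vec d)} {m : Exp d} (h : ∀ a ∈ m.support, a ∈ M.mon C) :
    Tot m ∈ M.mon C := by
  refine AddSubmonoid.sum_mem _ fun a ha => ?_
  exact AddSubmonoid.nsmul_mem _ (h a ha) _

lemma latt_Tot (m : Exp d) : latt (Tot m) = ∑ a ∈ m.support, (m a) • latt a := by
  have : latt (Tot m) = lattHom (Tot m) := rfl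
  rw [this, Tot, Finsupp.sum, map_sum]
  exact Finset.sum_congr rfl fun a _ => map_nsmul lattHom _ _

/-- Key splitting lemma: if all elements of the support of `m` lie in `M_C`, and the total
lies in a cone `D`, then all elements of the support lie in `M_{C ∩ D}`. -/
lemma split {C D : Set (Vec d)} (hC : C ∈ Φ.cones) (hD : D ∈ Φ.cones) {m : Exp d}
    (hm : ∀ a ∈ m.support, a ∈ M.mon C) (hT : latt (Tot m) ∈ D) :
    ∀ a ∈ m.support, a ∈ M.mon (C ∩ D) := by
  have hTC : latt (Tot m) ∈ C := mem_cone_of_mem_mon M hC (Tot_mem_mon M hm)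
  have hsum : (∑ a ∈ m.support, (m a) • latt a) ∈ C ∩ D := by
    rw [← latt_Tot]; exact ⟨hTC, hT⟩
  have hterm : ∀ a ∈ m.support, (m a) • latt a ∈ C := fun a ha =>
    cone_nsmul M hC (mem_cone_of_mem_mon M hC (hm a ha)) _
  have hface := face_sum M hC hD hterm hsum
  intro a ha
  have hma : m a ≠ 0 := Finsupp.mem_support_iff.1 ha
  obtain ⟨k, hk⟩ := Nat.exists_eq_succ_of_ne_zero hma
  have hla : latt a ∈ C ∩ D := by
    have h1 := hface a ha
    rw [hk, succ_nsmul'] at h1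
    exact (Φ.inter_face C hC D hD).1.2.2 (latt a) (mem_cone_of_mem_mon M hC (hm a ha))
      _ (cone_nsmul M hC (mem_cone_of_mem_mon M hC (hm a ha)) k) h1
  exact mem_mon_inter M hC hD (hm a ha) hla.2

lemma split' {C D : Set (Vec d)} (hC : C ∈ Φ.cones) (hD : D ∈ Φ.cones) {m : Exp d}
    (hm : ∀ a ∈ m.support, a ∈ M.mon C) (hT : Tot m ∈ M.mon D) :
    ∀ a ∈ m.support, a ∈ M.mon D := fun a ha =>
  mon_inter_subset_right M hC hD (split M hC hD hm (mem_cone_of_mem_mon M hD hT) a ha)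

/-- Two lattice points lying in a common monoid of the complex. -/
def CompatPair (a b : Fin d → ℤ) : Prop := ∃ C ∈ Φ.cones, a ∈ M.mon C ∧ b ∈ M.mon C

omit M in
lemma support_add_left {m m' : Exp d} {v : Fin d → ℤ} (hv : v ∈ m.support) :
    v ∈ (m + m').support := by
  rw [Finsupp.mem_support_iff] at *
  simp only [Finsupp.add_apply]
  omega

omit M in
lemma mem_support_add_single (m : Exp d) (a : Fin d → ℤ) :
    a ∈ (m + Finsupp.single a 1).support := by
  rw [Finsupp.mem_support_iff]
  simp

lemma pair_split {a b : Fin d → ℤ} (hab : CompatPair M a b) {D : Set (Vec d)}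
    (hD : D ∈ Φ.cones) (hsum : a + b ∈ M.mon D) : a ∈ M.mon D ∧ b ∈ M.mon D := by
  obtain ⟨C, hC, haC, hbC⟩ := hab
  set m : Exp d := Finsupp.single a 1 + Finsupp.single b 1 with hm
  have hsupp : ∀ v ∈ m.support, v ∈ M.mon C := by
    intro v hv
    have := Finsupp.support_add hv
    rcases Finset.mem_union.1 this with h | h <;>
      rw [Finset.mem_coe.symm] at h
    · have := Finsupp.support_single_subset h
      simp only [Finset.mem_singleton] at this; subst this; exact haC
    · have := Finsupp.support_single_subset h
      simp only [Finset.mem_singleton] at this; subst this; exact hbC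
  have hTot : Tot m = a + b := by rw [hm, Tot_add, Tot_single_one, Tot_single_one]
  have h := split' M hC hD hsupp (by rwa [hTot])
  constructor
  · refine h a ?_
    rw [Finsupp.mem_support_iff, hm]
    simp
  · refine h b ?_
    rw [Finsupp.mem_support_iff, hm]
    simp

lemma mem_supp_iff {a : Fin d → ℤ} : a ∈ M.supp ↔ ∃ C ∈ Φ.cones, a ∈ M.mon C := by
  simp [MonoidalComplex.supp]

lemma zero_mem_supp : (0 : Fin d → ℤ) ∈ M.supp := by
  obtain ⟨C, hC⟩ := Φ.nonempty
  exact (mem_supp_iff M).2 ⟨C, hC, (M.mon C).zero_mem⟩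

end MVAux

end MVAux2
noncomputable section MVAux3

open MvPolynomial Finsupp

namespace MVAux

variable {d : ℕ} {Φ : Fan d}

variable (K : Type*) [Field K] {Φ : Fan d} (M : MonoidalComplex Φ)

lemma rel1 {a b : Fin d → ℤ} (h : CompatPair M a b) :
    xv K M a * xv K M b = xv K M (a + b) := by
  have hmem : (MvPolynomial.X a * MvPolynomial.X b - MvPolynomial.X (a + b) :
      MvPolynomial (Fin d → ℤ) K) ∈ tfrRel K M := by
    apply Ideal.subset_span
    left; left; left
    exact ⟨a, b, h, rfl⟩
  have : xv K M a * xv K M b - xv K M (a + b) = 0 := by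
    rw [xv, xv, xv, ← map_mul, ← map_sub]
    exact (Ideal.Quotient.eq_zero_iff_mem).2 hmem
  linear_combination this

lemma rel2 {a b : Fin d → ℤ} (ha : a ∈ M.supp) (hb : b ∈ M.supp)
    (h : ¬ CompatPair M a b) : xv K M a * xv K M b = 0 := by
  have hmem : (MvPolynomial.X a * MvPolynomial.X b : MvPolynomial (Fin d → ℤ) K)
      ∈ tfrRel K M := by
    apply Ideal.subset_span
    left; left; right
    exact ⟨a, b, ha, hb, h, rfl⟩
  rw [xv, xv, ← map_mul]
  exact (Ideal.Quotient.eq_zero_iff_mem).2 hmem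

lemma rel3 {a : Fin d → ℤ} (ha : a ∉ M.supp) : xv K M a = 0 := by
  have hmem : (MvPolynomial.X a : MvPolynomial (Fin d → ℤ) K) ∈ tfrRel K M := by
    apply Ideal.subset_span
    left; right
    exact ⟨a, ha, rfl⟩
  exact (Ideal.Quotient.eq_zero_iff_mem).2 hmem

lemma rel4 : xv K M 0 = 1 := by
  have hmem : (MvPolynomial.X 0 - 1 : MvPolynomial (Fin d → ℤ) K) ∈ tfrRel K M := by
    apply Ideal.subset_span
    right
    rfl
  have : xv K M 0 - 1 = 0 := by
    rw [xv, ← map_one (Ideal.Quotient.mk (tfrRel K M)), ← map_sub]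
    exact (Ideal.Quotient.eq_zero_iff_mem).2 hmem
  linear_combination this

open Classical in
/-- The class of the monomial `X^m` in the toric face ring. -/
lemma mk_monomial (m : Exp d) :
    Ideal.Quotient.mk (tfrRel K M) (MvPolynomial.monomial m 1) =
      if Cmp M m then xv K M (Tot m) else 0 := by
  classical
  suffices H : ∀ (n : ℕ) (m : Exp d), (m.sum fun _ k => k) = n →
      Ideal.Quotient.mk (tfrRel K M) (MvPolynomial.monomial m 1) =
        if Cmp M m then xv K M (Tot m) else 0 by
    exact H _ m rfl
  intro n
  induction n with
  | zero =>
    intro m hm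
    have hm0 : m = 0 := by
      ext v
      simp only [Finsupp.coe_zero, Pi.zero_apply]
      by_contra hv
      have hv' : v ∈ m.support := Finsupp.mem_support_iff.2 hv
      have : m v ≤ m.sum fun _ k => k := Finset.single_le_sum (f := fun a => m a)
        (fun _ _ => Nat.zero_le _) hv'
      omega
    subst hm0
    have hcmp : Cmp M (0 : Exp d) := by
      obtain ⟨C, hC⟩ := Φ.nonempty
      exact ⟨C, hC, by simp⟩
    rw [if_pos hcmp, Tot_zero, rel4]
    simp [MvPolynomial.monomial_zero']
  | succ n ih =>
    intro m hm
    -- pick an element of the support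
    have hne : m.support.Nonempty := by
      by_contra h
      rw [Finset.not_nonempty_iff_eq_empty] at h
      have : m = 0 := Finsupp.support_eq_empty.1 h
      subst this
      simp [Finsupp.sum_zero_index] at hm
    obtain ⟨a, ha⟩ := hne
    have hma : m a ≠ 0 := Finsupp.mem_support_iff.1 ha
    set m' : Exp d := m - Finsupp.single a 1 with hm'def
    have hsplit : m = m' + Finsupp.single a 1 := by
      ext v
      simp only [Finsupp.add_apply, Finsupp.tsub_apply, Finsupp.single_apply, hm'def]
      by_cases hva : a = v
      · subst hva; simp; omega
      · simp [hva]
    have hsum' : (m'.sum fun _ k => k) = n := by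
      have : (m.sum fun _ k => k) = (m'.sum fun _ k => k) + 1 := by
        rw [hsplit, Finsupp.sum_add_index' (fun _ => rfl) (fun _ k₁ k₂ => rfl),
          Finsupp.sum_single_index rfl]
      omega
    have hsuppm' : m'.support ⊆ m.support := by
      intro v hv
      rw [Finsupp.mem_support_iff] at *
      intro h0
      apply hv
      rw [hsplit] at h0
      simp only [Finsupp.add_apply] at h0
      omega
    have hmono : (MvPolynomial.monomial m (1 : K)) =
        MvPolynomial.monomial m' 1 * MvPolynomial.X a := by
      rw [MvPolynomial.X, MvPolynomial.monomial_mul, mul_one, ← hsplit]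
    have hTot : Tot m = Tot m' + a := by
      rw [hsplit, Tot_add, Tot_single_one]
    rw [hmono, map_mul, ih m' hsum']
    by_cases hc' : Cmp M m'
    · rw [if_pos hc']
      obtain ⟨C, hC, hmC⟩ := hc'
      have hTotC : Tot m' ∈ M.mon C := Tot_mem_mon M hmC
      have hTsupp : Tot m' ∈ M.supp := (mem_supp_iff M).2 ⟨C, hC, hTotC⟩
      by_cases hcom : CompatPair M (Tot m') a
      · -- compatible: product is x^(Tot m)
        rw [show Ideal.Quotient.mk (tfrRel K M) (MvPolynomial.X a) = xv K M a from rfl,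
          rel1 K M hcom]
        have hcm : Cmp M m := by
          obtain ⟨D, hD, hTD, haD⟩ := hcom
          refine ⟨D, hD, ?_⟩
          have hmD : ∀ v ∈ m'.support, v ∈ M.mon D := split' M hC hD hmC hTD
          intro v hv
          rw [hsplit] at hv
          rcases Finset.mem_union.1 (Finsupp.support_add hv) with h | h
          · exact hmD v h
          · have := Finsupp.support_single_subset h
            simp only [Finset.mem_singleton] at this
            subst this; exact haD
        rw [if_pos hcm, hTot]
      · -- incompatible: product is zero
        have hzero : xv K M (Tot m') * xv K M a = 0 := by
          by_cases haS : a ∈ M.supp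
          · exact rel2 K M hTsupp haS hcom
          · rw [rel3 K M haS, mul_zero]
        rw [show Ideal.Quotient.mk (tfrRel K M) (MvPolynomial.X a) = xv K M a from rfl, hzero]
        have hnc : ¬ Cmp M m := by
          rintro ⟨D, hD, hmD⟩
          exact hcom ⟨D, hD, Tot_mem_mon M (fun v hv => hmD v (hsuppm' hv)), hmD a ha⟩
        rw [if_neg hnc]
    · rw [if_neg hc', zero_mul]
      have hnc : ¬ Cmp M m := by
        rintro ⟨D, hD, hmD⟩
        exact hc' ⟨D, hD, fun v hv => hmD v (hsuppm' hv)⟩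
      rw [if_neg hnc]

end MVAux

end MVAux3
noncomputable section MVAux4

open MvPolynomial Finsupp

namespace MVAux

variable {d : ℕ} (K : Type*) [Field K] {Φ : Fan d} (M : MonoidalComplex Φ)

/-- The set of lattice points of a collection of cones. -/
abbrev USet (S : Set (Set (Vec d))) : Set (Fin d → ℤ) :=
  ⋃ C ∈ S, (M.mon C : Set (Fin d → ℤ))

open Classical in
/-- The value of the monomial `X^m` in the model vector space. -/
def evB (m : Exp d) : (Fin d → ℤ) →₀ K :=
  if Cmp M m then Finsupp.single (Tot m) 1 else 0

lemma evB_congr {m₁ m₂ : Exp d} (h : Cmp M m₁ ↔ Cmp M m₂) (hT : Tot m₁ = Tot m₂) :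
    evB K M m₁ = evB K M m₂ := by
  classical
  unfold evB
  by_cases h1 : Cmp M m₁
  · rw [if_pos h1, if_pos (h.1 h1), hT]
  · rw [if_neg h1, if_neg (fun h2 => h1 (h.2 h2))]

/-- The linear projection of the polynomial ring onto the model vector space. -/
def phi : MvPolynomial (Fin d → ℤ) K →ₗ[K] ((Fin d → ℤ) →₀ K) :=
  (MvPolynomial.basisMonomials (Fin d → ℤ) K).constr K (evB K M)

lemma phi_monomial (m : Exp d) (c : K) :
    phi K M (MvPolynomial.monomial m c) = c • evB K M m := by
  have h1 : phi K M (MvPolynomial.monomial m 1) = evB K M m := by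
    have := (MvPolynomial.basisMonomials (Fin d → ℤ) K).constr_basis K (evB K M) m
    rwa [show (MvPolynomial.basisMonomials (Fin d → ℤ) K) m = MvPolynomial.monomial m 1 by
      rw [MvPolynomial.coe_basisMonomials]] at this
  rw [show (MvPolynomial.monomial m c : MvPolynomial (Fin d → ℤ) K) =
    c • MvPolynomial.monomial m 1 by rw [MvPolynomial.smul_monomial, smul_eq_mul, mul_one]]
  rw [map_smul, h1]

lemma cmp_mono {m m' : Exp d} (h : m'.support ⊆ m.support) (hc : Cmp M m) : Cmp M m' := by
  obtain ⟨C, hC, hm⟩ := hc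
  exact ⟨C, hC, fun a ha => hm a (h ha)⟩

lemma cmp_pair_iff {a b : Fin d → ℤ} (h : CompatPair M a b) (m : Exp d) :
    Cmp M (m + Finsupp.single a 1 + Finsupp.single b 1) ↔
      Cmp M (m + Finsupp.single (a + b) 1) := by
  have hamem : a ∈ (m + Finsupp.single a 1 + Finsupp.single b 1).support :=
    support_add_left (mem_support_add_single m a)
  have hbmem : b ∈ (m + Finsupp.single a 1 + Finsupp.single b 1).support :=
    mem_support_add_single _ b
  constructor
  · rintro ⟨D, hD, hs⟩
    refine ⟨D, hD, fun v hv => ?_⟩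
    rcases Finset.mem_union.1 (Finsupp.support_add hv) with h1 | h1
    · exact hs v (support_add_left (support_add_left h1))
    · have := Finsupp.support_single_subset h1
      simp only [Finset.mem_singleton] at this
      subst this
      exact AddSubmonoid.add_mem _ (hs a hamem) (hs b hbmem)
  · rintro ⟨D, hD, hs⟩
    have habD : a + b ∈ M.mon D := hs _ (mem_support_add_single m (a + b))
    obtain ⟨haD, hbD⟩ := pair_split M h hD habD
    refine ⟨D, hD, fun v hv => ?_⟩
    rcases Finset.mem_union.1 (Finsupp.support_add hv) with h1 | h1
    · rcases Finset.mem_union.1 (Finsupp.support_add h1) with h2 | h2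
      · exact hs v (support_add_left h2)
      · have := Finsupp.support_single_subset h2
        simp only [Finset.mem_singleton] at this
        subst this; exact haD
    · have := Finsupp.support_single_subset h1
      simp only [Finset.mem_singleton] at this
      subst this; exact hbD

lemma not_cmp_incompat {a b : Fin d → ℤ} (h : ¬ CompatPair M a b) (m : Exp d) :
    ¬ Cmp M (m + Finsupp.single a 1 + Finsupp.single b 1) := by
  rintro ⟨D, hD, hs⟩
  exact h ⟨D, hD, hs a (support_add_left (mem_support_add_single m a)),
    hs b (mem_support_add_single _ b)⟩

lemma not_cmp_notsupp {a : Fin d → ℤ} (h : a ∉ M.supp) (m : Exp d) :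
    ¬ Cmp M (m + Finsupp.single a 1) := by
  rintro ⟨D, hD, hs⟩
  exact h ((mem_supp_iff M).2 ⟨D, hD, hs a (mem_support_add_single m a)⟩)

lemma cmp_zero_iff (m : Exp d) :
    Cmp M (m + Finsupp.single 0 1) ↔ Cmp M m := by
  constructor
  · intro h
    exact cmp_mono M (fun v hv => support_add_left hv) h
  · rintro ⟨D, hD, hs⟩
    refine ⟨D, hD, fun v hv => ?_⟩
    rcases Finset.mem_union.1 (Finsupp.support_add hv) with h1 | h1
    · exact hs v h1
    · have := Finsupp.support_single_subset h1
      simp only [Finset.mem_singleton] at this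
      subst this; exact AddSubmonoid.zero_mem _

/-- `phi` kills the defining relations. -/
lemma phi_mul_tfr {p : MvPolynomial (Fin d → ℤ) K} (hp : p ∈ tfrRel K M) :
    ∀ q : MvPolynomial (Fin d → ℤ) K, phi K M (q * p) = 0 := by
  have key : ∀ x ∈ ({p | ∃ a b, (∃ C ∈ Φ.cones, a ∈ M.mon C ∧ b ∈ M.mon C) ∧
        p = MvPolynomial.X a * MvPolynomial.X b - MvPolynomial.X (a + b)} ∪
    {p | ∃ a b, a ∈ M.supp ∧ b ∈ M.supp ∧ (¬ ∃ C ∈ Φ.cones, a ∈ M.mon C ∧ b ∈ M.mon C) ∧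
        p = MvPolynomial.X a * MvPolynomial.X b} ∪
    {p | ∃ a, a ∉ M.supp ∧ p = MvPolynomial.X a} ∪
    {MvPolynomial.X 0 - 1} : Set (MvPolynomial (Fin d → ℤ) K)),
      ∀ q : MvPolynomial (Fin d → ℤ) K, phi K M (q * x) = 0 := by
    rintro x (((⟨a, b, hab, rfl⟩ | ⟨a, b, ha, hb, hnc, rfl⟩) | ⟨a, ha, rfl⟩) | hx)
    · intro q
      induction q using MvPolynomial.induction_on' with
      | add p q hp hq => rw [add_mul, map_add, hp, hq, add_zero]
      | monomial m c =>
        rw [mul_sub, ← mul_assoc, MvPolynomial.X, MvPolynomial.X, MvPolynomial.X,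
          MvPolynomial.monomial_mul, MvPolynomial.monomial_mul, MvPolynomial.monomial_mul,
          mul_one, mul_one, map_sub, phi_monomial, phi_monomial,
          evB_congr K M (cmp_pair_iff M hab m)
            (by rw [Tot_add, Tot_add, Tot_add, Tot_single_one, Tot_single_one, Tot_single_one,
              add_assoc]),
          sub_self]
    · intro q
      induction q using MvPolynomial.induction_on' with
      | add p q hp hq => rw [add_mul, map_add, hp, hq, add_zero]
      | monomial m c =>
        rw [← mul_assoc, MvPolynomial.X, MvPolynomial.X, MvPolynomial.monomial_mul,
          MvPolynomial.monomial_mul, mul_one, mul_one, phi_monomial]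
        have := not_cmp_incompat M hnc m
        rw [show evB K M (m + Finsupp.single a 1 + Finsupp.single b 1) = 0 from
          if_neg this, smul_zero]
    · intro q
      induction q using MvPolynomial.induction_on' with
      | add p q hp hq => rw [add_mul, map_add, hp, hq, add_zero]
      | monomial m c =>
        rw [MvPolynomial.X, MvPolynomial.monomial_mul, mul_one, phi_monomial]
        rw [show evB K M (m + Finsupp.single a 1) = 0 from
          if_neg (not_cmp_notsupp M ha m), smul_zero]
    · simp only [Set.mem_singleton_iff] at hx
      subst hx
      intro q
      induction q using MvPolynomial.induction_on' with
      | add p q hp hq => rw [add_mul, map_add, hp, hq, add_zero]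
      | monomial m c =>
        rw [mul_sub, mul_one, MvPolynomial.X, MvPolynomial.monomial_mul, mul_one,
          map_sub, phi_monomial, phi_monomial,
          evB_congr K M (cmp_zero_iff M m)
            (by rw [Tot_add, Tot_single_one, add_zero]), sub_self]
  refine Submodule.span_induction key ?_ ?_ ?_ hp
  · intro q; rw [mul_zero, map_zero]
  · intro x y _ _ hx hy q
    rw [mul_add, map_add, hx, hy, add_zero]
  · intro r x _ hx q
    rw [smul_eq_mul, show q * (r * x) = (q * r) * x by ring, hx]

lemma phi_tfr {p : MvPolynomial (Fin d → ℤ) K} (hp : p ∈ tfrRel K M) : phi K M p = 0 := by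
  have := phi_mul_tfr K M hp 1
  rwa [one_mul] at this

/-- Coordinate subspaces of the model vector space. -/
def Wsub (T : Set (Fin d → ℤ)) : Submodule K ((Fin d → ℤ) →₀ K) where
  carrier := {f | ∀ b ∈ T, f b = 0}
  add_mem' := by
    intro f g hf hg b hb
    simp [hf b hb, hg b hb]
  zero_mem' := by intro b _; simp
  smul_mem' := by
    intro c f hf b hb
    simp [hf b hb]

lemma tot_not_mem {S : Set (Set (Vec d))} (hS : Φ.IsSubfan S) {m : Exp d} {a : Fin d → ℤ}
    (hCmp : Cmp M (m + Finsupp.single a 1)) (ha : a ∉ USet M S) :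
    Tot (m + Finsupp.single a 1) ∉ USet M S := by
  intro hmem
  obtain ⟨E, hES, hTE⟩ := by
    simpa only [Set.mem_iUnion, SetLike.mem_coe, exists_prop] using hmem
  obtain ⟨D, hD, hs⟩ := hCmp
  have hE : E ∈ Φ.cones := hS.1 hES
  have hlatt : latt (Tot (m + Finsupp.single a 1)) ∈ E := mem_cone_of_mem_mon M hE hTE
  have hsplit := split M hD hE hs hlatt
  have haDE : a ∈ M.mon (D ∩ E) := hsplit a (mem_support_add_single m a)
  have hDE : D ∩ E ∈ S := hS.2 E hES (D ∩ E) (inter_mem_cones hD hE) Set.inter_subset_right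
  exact ha (Set.mem_biUnion hDE haDE)

lemma phi_mul_q {S : Set (Set (Vec d))} (hS : Φ.IsSubfan S)
    {p : MvPolynomial (Fin d → ℤ) K}
    (hp : p ∈ Ideal.span {q : MvPolynomial (Fin d → ℤ) K | ∃ a, a ∉ USet M S ∧
      q = MvPolynomial.X a}) :
    phi K M p ∈ Wsub K (USet M S) := by
  classical
  have key : ∀ x ∈ {q : MvPolynomial (Fin d → ℤ) K | ∃ a, a ∉ USet M S ∧
      q = MvPolynomial.X a}, ∀ q : MvPolynomial (Fin d → ℤ) K,
      phi K M (q * x) ∈ Wsub K (USet M S) := by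
    rintro x ⟨a, ha, rfl⟩ q
    induction q using MvPolynomial.induction_on' with
    | add p q hp hq => rw [add_mul, map_add]; exact Submodule.add_mem _ hp hq
    | monomial m c =>
      rw [MvPolynomial.X, MvPolynomial.monomial_mul, mul_one, phi_monomial]
      refine Submodule.smul_mem _ _ ?_
      by_cases hc : Cmp M (m + Finsupp.single a 1)
      · rw [show evB K M (m + Finsupp.single a 1) =
          Finsupp.single (Tot (m + Finsupp.single a 1)) 1 from if_pos hc]
        intro b hb
        rw [Finsupp.single_apply, if_neg]
        intro hEq
        exact tot_not_mem M hS hc ha (hEq ▸ hb)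
      · rw [show evB K M (m + Finsupp.single a 1) = 0 from if_neg hc]
        exact Submodule.zero_mem _
  have main : ∀ q : MvPolynomial (Fin d → ℤ) K, phi K M (q * p) ∈ Wsub K (USet M S) := by
    refine Submodule.span_induction key ?_ ?_ ?_ hp
    · intro q; rw [mul_zero, map_zero]; exact Submodule.zero_mem _
    · intro x y _ _ hx hy q
      rw [mul_add, map_add]; exact Submodule.add_mem _ (hx q) (hy q)
    · intro r x _ hx q
      rw [smul_eq_mul, show q * (r * x) = (q * r) * x by ring]; exact hx _
  have := main 1
  rwa [one_mul] at this

lemma phi_mem_supp (p : MvPolynomial (Fin d → ℤ) K) :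
    phi K M p ∈ Wsub K (M.suppᶜ) := by
  classical
  induction p using MvPolynomial.induction_on' with
  | add p q hp hq => rw [map_add]; exact Submodule.add_mem _ hp hq
  | monomial m c =>
    rw [phi_monomial]
    refine Submodule.smul_mem _ _ ?_
    by_cases hc : Cmp M m
    · rw [show evB K M m = Finsupp.single (Tot m) 1 from if_pos hc]
      intro b hb
      obtain ⟨C, hC, hs⟩ := hc
      have hT : Tot m ∈ M.supp := (mem_supp_iff M).2 ⟨C, hC, Tot_mem_mon M hs⟩
      rw [Finsupp.single_apply, if_neg]
      intro hEq
      exact hb (hEq ▸ hT)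
    · rw [show evB K M m = 0 from if_neg hc]
      exact Submodule.zero_mem _

/-- The linear section sending basis vectors to monomials of the toric face ring. -/
def psi : ((Fin d → ℤ) →₀ K) →ₗ[K] TFR K M :=
  Finsupp.linearCombination K (xv K M)

lemma psi_phi (p : MvPolynomial (Fin d → ℤ) K) :
    psi K M (phi K M p) = Ideal.Quotient.mk (tfrRel K M) p := by
  classical
  induction p using MvPolynomial.induction_on' with
  | add p q hp hq => rw [map_add, map_add, hp, hq, map_add]
  | monomial m c =>
    rw [phi_monomial, map_smul]
    have hmk : Ideal.Quotient.mk (tfrRel K M) (MvPolynomial.monomial m c) =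
        c • Ideal.Quotient.mk (tfrRel K M) (MvPolynomial.monomial m 1) := by
      rw [show (MvPolynomial.monomial m c : MvPolynomial (Fin d → ℤ) K) =
        c • MvPolynomial.monomial m 1 by rw [MvPolynomial.smul_monomial, smul_eq_mul, mul_one]]
      rw [← Ideal.Quotient.mkₐ_eq_mk K, map_smul]
    rw [hmk, mk_monomial K M m]
    by_cases hc : Cmp M m
    · rw [if_pos hc, show evB K M m = Finsupp.single (Tot m) 1 from if_pos hc]
      rw [psi, Finsupp.linearCombination_single, one_smul]
    · rw [if_neg hc, show evB K M m = 0 from if_neg hc]; simp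

end MVAux

end MVAux4
noncomputable section MVAux5

open MvPolynomial Finsupp

namespace MVAux

variable {d : ℕ} (K : Type*) [Field K] {Φ : Fan d} (M : MonoidalComplex Φ)

lemma qIdeal_eq_map (S : Set (Set (Vec d))) :
    qIdeal K M S = Ideal.map (Ideal.Quotient.mk (tfrRel K M))
      (Ideal.span {q : MvPolynomial (Fin d → ℤ) K | ∃ a, a ∉ USet M S ∧
        q = MvPolynomial.X a}) := by
  rw [Ideal.map_span, qIdeal]
  congr 1
  ext x
  constructor
  · rintro ⟨a, ha, rfl⟩
    exact ⟨MvPolynomial.X a, ⟨a, ha, rfl⟩, rfl⟩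
  · rintro ⟨p, ⟨a, ha, rfl⟩, rfl⟩
    exact ⟨a, ha, rfl⟩

lemma mem_USet_inter {S₁ S₂ : Set (Set (Vec d))} (h₁ : Φ.IsSubfan S₁) (h₂ : Φ.IsSubfan S₂)
    {a : Fin d → ℤ} (ha₁ : a ∈ USet M S₁) (ha₂ : a ∈ USet M S₂) :
    a ∈ USet M (S₁ ∩ S₂) := by
  obtain ⟨C, hC, haC⟩ := by
    simpa only [Set.mem_iUnion, SetLike.mem_coe, exists_prop] using ha₁
  obtain ⟨D, hD, haD⟩ := by
    simpa only [Set.mem_iUnion, SetLike.mem_coe, exists_prop] using ha₂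
  have hC' : C ∈ Φ.cones := h₁.1 hC
  have hD' : D ∈ Φ.cones := h₂.1 hD
  have hCD : a ∈ M.mon (C ∩ D) :=
    mem_mon_inter M hC' hD' haC (mem_cone_of_mem_mon M hD' haD)
  have hmem : C ∩ D ∈ S₁ ∩ S₂ :=
    ⟨h₁.2 C hC (C ∩ D) (inter_mem_cones hC' hD') Set.inter_subset_left,
     h₂.2 D hD (C ∩ D) (inter_mem_cones hC' hD') Set.inter_subset_right⟩
  exact Set.mem_biUnion hmem hCD

lemma q_sup_eq {S₁ S₂ : Set (Set (Vec d))} (h₁ : Φ.IsSubfan S₁) (h₂ : Φ.IsSubfan S₂) :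
    qIdeal K M S₁ ⊔ qIdeal K M S₂ = qIdeal K M (S₁ ∩ S₂) := by
  rw [qIdeal, qIdeal, qIdeal, ← Ideal.span_union]
  congr 1
  ext x
  constructor
  · rintro (⟨a, ha, rfl⟩ | ⟨a, ha, rfl⟩)
    · refine ⟨a, fun hmem => ha ?_, rfl⟩
      exact Set.biUnion_subset_biUnion_left Set.inter_subset_left hmem
    · refine ⟨a, fun hmem => ha ?_, rfl⟩
      exact Set.biUnion_subset_biUnion_left Set.inter_subset_right hmem
  · rintro ⟨a, ha, rfl⟩
    by_cases h : a ∈ USet M S₁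
    · right
      refine ⟨a, fun h2 => ha ?_, rfl⟩
      exact mem_USet_inter M h₁ h₂ h h2
    · left
      exact ⟨a, h, rfl⟩

lemma q_inter_eq_bot {S₁ S₂ : Set (Set (Vec d))} (h₁ : Φ.IsSubfan S₁) (h₂ : Φ.IsSubfan S₂)
    (hu : S₁ ∪ S₂ = Φ.cones) :
    qIdeal K M S₁ ⊓ qIdeal K M S₂ = ⊥ := by
  rw [eq_bot_iff]
  rintro z ⟨hz₁, hz₂⟩
  rw [qIdeal_eq_map] at hz₁ hz₂
  obtain ⟨p₁, hp₁, hmk₁⟩ := (Ideal.mem_map_iff_of_surjective _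
    Ideal.Quotient.mk_surjective).1 hz₁
  obtain ⟨p₂, hp₂, hmk₂⟩ := (Ideal.mem_map_iff_of_surjective _
    Ideal.Quotient.mk_surjective).1 hz₂
  have hphi_eq : phi K M p₁ = phi K M p₂ := by
    have hd : p₁ - p₂ ∈ tfrRel K M := by
      rw [← Ideal.Quotient.eq_zero_iff_mem, map_sub, hmk₁, hmk₂, sub_self]
    have := phi_tfr K M hd
    rw [map_sub, sub_eq_zero] at this
    exact this
  have hW₁ : phi K M p₁ ∈ Wsub K (USet M S₁) := phi_mul_q K M h₁ hp₁
  have hW₂ : phi K M p₁ ∈ Wsub K (USet M S₂) := hphi_eq ▸ phi_mul_q K M h₂ hp₂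
  have hWs : phi K M p₁ ∈ Wsub K (M.suppᶜ) := phi_mem_supp K M p₁
  have hzero : phi K M p₁ = 0 := by
    ext b
    rw [Finsupp.coe_zero, Pi.zero_apply]
    by_cases hb : b ∈ M.supp
    · obtain ⟨C, hC, hbC⟩ := (mem_supp_iff M).1 hb
      rw [← hu] at hC
      rcases hC with hC | hC
      · exact hW₁ b (Set.mem_biUnion hC hbC)
      · exact hW₂ b (Set.mem_biUnion hC hbC)
    · exact hWs b hb
  have : z = psi K M (phi K M p₁) := by rw [psi_phi, hmk₁]
  rw [this, hzero, map_zero]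
  exact Submodule.zero_mem ⊥

end MVAux

end MVAux5
/-- If the rational pointed fan `Φ` is the union of two subfans `S₁, S₂`,
then in `K[M_Φ]` one has `q_{S₁} ∩ q_{S₂} = 0` and `q_{S₁} + q_{S₂} = q_{S₁ ∩ S₂}`, and the
sequence `0 → K[M_Φ] → K[M_{S₁}] ⊕ K[M_{S₂}] → K[M_{S₁∩S₂}] → 0` with maps
`a ↦ (ā, −ā)` and `(ā, b̄) ↦ (a+b)‾` is exact. -/
theorem mayer_vietoris_ses
    (K : Type*) [Field K] {d : ℕ} (Φ : Fan d) (M : MonoidalComplex Φ)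
    (S₁ S₂ : Set (Set (Vec d))) (h₁ : Φ.IsSubfan S₁) (h₂ : Φ.IsSubfan S₂)
    (hu : S₁ ∪ S₂ = Φ.cones) :
    qIdeal K M S₁ ⊓ qIdeal K M S₂ = ⊥ ∧
    qIdeal K M S₁ ⊔ qIdeal K M S₂ = qIdeal K M (S₁ ∩ S₂) ∧
    (Function.Injective
        (LinearMap.prod (Submodule.mkQ (qIdeal K M S₁)) (-(Submodule.mkQ (qIdeal K M S₂))))) ∧
    ∃ β : ((TFR K M ⧸ qIdeal K M S₁) × (TFR K M ⧸ qIdeal K M S₂)) →ₗ[TFR K M]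
        (TFR K M ⧸ qIdeal K M (S₁ ∩ S₂)),
      (∀ x y : TFR K M, β ((qIdeal K M S₁).mkQ x, (qIdeal K M S₂).mkQ y) =
        (qIdeal K M (S₁ ∩ S₂)).mkQ (x + y)) ∧
      Function.Surjective β ∧
      Function.Exact
        (LinearMap.prod (Submodule.mkQ (qIdeal K M S₁)) (-(Submodule.mkQ (qIdeal K M S₂)))) β := by
  have hbot : qIdeal K M S₁ ⊓ qIdeal K M S₂ = ⊥ := MVAux.q_inter_eq_bot K M h₁ h₂ hu
  have hsup : qIdeal K M S₁ ⊔ qIdeal K M S₂ = qIdeal K M (S₁ ∩ S₂) :=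
    MVAux.q_sup_eq K M h₁ h₂
  have hle₁ : qIdeal K M S₁ ≤ qIdeal K M (S₁ ∩ S₂) := hsup ▸ le_sup_left
  have hle₂ : qIdeal K M S₂ ≤ qIdeal K M (S₁ ∩ S₂) := hsup ▸ le_sup_right
  set q₁ := qIdeal K M S₁ with hq₁
  set q₂ := qIdeal K M S₂ with hq₂
  set q₃ := qIdeal K M (S₁ ∩ S₂) with hq₃
  set α := LinearMap.prod (Submodule.mkQ q₁) (-(Submodule.mkQ q₂)) with hα
  -- the two induced maps to the quotient by `q₃`
  set f₁ : (TFR K M ⧸ q₁) →ₗ[TFR K M] (TFR K M ⧸ q₃) :=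
    Submodule.mapQ q₁ q₃ LinearMap.id (by simpa using hle₁) with hf₁
  set f₂ : (TFR K M ⧸ q₂) →ₗ[TFR K M] (TFR K M ⧸ q₃) :=
    Submodule.mapQ q₂ q₃ LinearMap.id (by simpa using hle₂) with hf₂
  set β := f₁.coprod f₂ with hβ
  have hβval : ∀ x y : TFR K M, β (q₁.mkQ x, q₂.mkQ y) = q₃.mkQ (x + y) := by
    intro x y
    simp only [hβ, LinearMap.coprod_apply, hf₁, hf₂, Submodule.mkQ_apply,
      Submodule.mapQ_apply, LinearMap.id_coe, id_eq, map_add]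
  have hαval : ∀ x : TFR K M, α x = (q₁.mkQ x, -(q₂.mkQ x)) := by
    intro x
    simp [hα, LinearMap.prod_apply]
  refine ⟨hbot, hsup, ?_, β, hβval, ?_, ?_⟩
  · -- injectivity
    intro x y hxy
    rw [hαval, hαval, Prod.mk.injEq] at hxy
    obtain ⟨hxy₁, hxy₂⟩ := hxy
    rw [neg_inj] at hxy₂
    rw [Submodule.mkQ_apply, Submodule.mkQ_apply, Submodule.Quotient.eq] at hxy₁ hxy₂
    have : x - y ∈ q₁ ⊓ q₂ := ⟨hxy₁, hxy₂⟩
    rw [hbot, Submodule.mem_bot] at this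
    exact sub_eq_zero.1 this
  · -- surjectivity
    intro c
    obtain ⟨x, rfl⟩ := Submodule.mkQ_surjective q₃ c
    refine ⟨(q₁.mkQ x, q₂.mkQ 0), ?_⟩
    rw [hβval x 0, add_zero]
  · -- exactness
    intro y
    obtain ⟨u, v⟩ := y
    obtain ⟨x, rfl⟩ := Submodule.mkQ_surjective q₁ u
    obtain ⟨y, rfl⟩ := Submodule.mkQ_surjective q₂ v
    constructor
    · intro h0
      rw [hβval, Submodule.mkQ_apply, Submodule.Quotient.mk_eq_zero] at h0
      rw [← hsup] at h0
      obtain ⟨u₁, hu₁, u₂, hu₂, hsum⟩ := Submodule.mem_sup.1 h0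
      refine ⟨x - u₁, ?_⟩
      rw [hαval, Prod.mk.injEq]
      constructor
      · rw [Submodule.mkQ_apply, Submodule.mkQ_apply, Submodule.Quotient.eq]
        simpa using q₁.neg_mem hu₁
      · rw [← map_neg, neg_sub, Submodule.mkQ_apply, Submodule.mkQ_apply,
          Submodule.Quotient.eq]
        have : u₁ - x - y = -u₂ := by
          have : x + y = u₁ + u₂ := hsum.symm
          linear_combination -this
        rw [this]
        exact q₂.neg_mem hu₂
    · rintro ⟨z, hz⟩
      rw [hαval, Prod.mk.injEq] at hz
      obtain ⟨hz₁, hz₂⟩ := hz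
      rw [← hz₁, ← hz₂, ← map_neg, hβval, add_neg_cancel, map_zero]
end

section
/- Let Σ be a rational pointed fan in R^d such that K[Σ] is Gorenstein with canonical module ω_{K[Σ]} ≅ K[Σ](−σ) for some σ ∈ Z^d. Then σ lies in every maximal cone of Σ, i.e., σ ∈ ⋂_{C maximal in Σ} C ∩ Z^d. -/
set_option synthInstance.maxHeartbeats 1000000
set_option maxHeartbeats 4000000

open RingTheory.Sequence

noncomputable section

variable (K : Type*) [Field K]

/-! ### The star, incidence functions, the complex `D_•` and the canonical module -/

/-- The star of a cone `C` in the fan `Φ`: all cones of `Φ` containing `C`. -/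
def starSet {d : ℕ} (Φ : Fan d) (C : Set (Vec d)) : Set (Set (Vec d)) :=
  Φ.cones ∩ {D | C ⊆ D}

open Classical in
/-- `eps` is an incidence function on the fan `Φ` (with values in `K`). -/
def IsIncidence {d : ℕ} (K : Type) [Field K] (Φ : Fan d)
    (eps : Set (Vec d) → Set (Vec d) → K) : Prop :=
  (∀ C C', eps C C' = 0 ∨ eps C C' = 1 ∨ eps C C' = -1) ∧
  (∀ C ∈ Φ.cones, ∀ C' ∈ Φ.cones,
    (eps C C' ≠ 0 ↔ IsFaceOf C' C ∧ coneDim C' + 1 = coneDim C)) ∧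
  (∀ C ∈ Φ.cones, coneDim C = 1 → eps C ({0} : Set (Vec d)) = 1) ∧
  (∀ C ∈ Φ.cones, ∀ C'' ∈ Φ.cones, IsFaceOf C'' C → coneDim C'' + 2 = coneDim C →
    ∑ C' ∈ Φ.finite.toFinset, eps C C' * eps C' C'' = 0)

/-- The `t`-th module of the complex `D_•(Φ)`: the direct sum of the rings
`K[Φ]/p_C ≅ K[C ∩ ℤ^d]` over the `t`-dimensional cones `C` of `Φ`. -/
abbrev Dmod (K : Type) [Field K] {d : ℕ} {Φ : Fan d} (M : MonoidalComplex Φ) (t : ℕ) :=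
  Π C : {C : Set (Vec d) // C ∈ Φ.cones ∧ coneDim C = t}, TFR K M ⧸ pIdeal K M C.1

open Classical in
/-- The natural face projection `K[Φ]/p_C → K[Φ]/p_{C'}` (for `C'` a face of `C`, when
`p_C ⊆ p_{C'}`), and `0` otherwise. -/
noncomputable def resMap (K : Type) [Field K] {d : ℕ} {Φ : Fan d} (M : MonoidalComplex Φ)
    (C C' : Set (Vec d)) :
    (TFR K M ⧸ pIdeal K M C) →ₗ[TFR K M] (TFR K M ⧸ pIdeal K M C') :=
  if h : pIdeal K M C ≤ pIdeal K M C' then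
    Submodule.mapQ (pIdeal K M C) (pIdeal K M C') LinearMap.id (fun x hx => h hx)
  else 0

open Classical in
/-- The differential `D_t → D_{t-1}` of the complex `D_•(Φ)`: the face projections
weighted by the incidence numbers. -/
noncomputable def Ddiff (K : Type) [Field K] {d : ℕ} {Φ : Fan d} (M : MonoidalComplex Φ)
    (eps : Set (Vec d) → Set (Vec d) → K) (t : ℕ) :
    Dmod K M t →ₗ[TFR K M] Dmod K M (t - 1) :=
  haveI : Finite {C : Set (Vec d) // C ∈ Φ.cones ∧ coneDim C = t} :=
    (Φ.finite.subset (fun C hC => hC.1)).to_subtype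
  haveI : Fintype {C : Set (Vec d) // C ∈ Φ.cones ∧ coneDim C = t} := Fintype.ofFinite _
  LinearMap.pi fun C' =>
    ∑ C : {C : Set (Vec d) // C ∈ Φ.cones ∧ coneDim C = t},
      algebraMap K (TFR K M) (eps C.1 C'.1) • ((resMap K M C.1 C'.1).comp (LinearMap.proj C))

/-- The canonical module `ω_{K[Φ]}` of the (Cohen–Macaulay) toric face ring, realized as
the kernel of `D_k → D_{k-1}` where `k = dim Φ`. -/
noncomputable def canonicalMod (K : Type) [Field K] {d : ℕ} {Φ : Fan d}
    (M : MonoidalComplex Φ) (eps : Set (Vec d) → Set (Vec d) → K) :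
    Submodule (TFR K M) (Dmod K M Φ.dim) :=
  LinearMap.ker (Ddiff K M eps Φ.dim)

/-- `ω_{K[Φ]} ≅ K[Φ](−σ)` as `ℤ^d`-graded modules: there is an isomorphism of
`K[Φ]`-modules sending, for each `a ∈ ℤ^d`, the degree-`a` component of `K[Φ]`
(the `K`-span of `x^a`) into the degree-`(a+σ)` component of `ω_{K[Φ]}`. -/
def GradedShiftIso (K : Type) [Field K] {d : ℕ} {Φ : Fan d} (M : MonoidalComplex Φ)
    (eps : Set (Vec d) → Set (Vec d) → K) (σ : Fin d → ℤ) : Prop :=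
  ∃ e : TFR K M ≃ₗ[TFR K M] ↥(canonicalMod K M eps),
    ∀ a : Fin d → ℤ, ∀ r ∈ Submodule.span K {xv K M a},
      ∀ C : {C : Set (Vec d) // C ∈ Φ.cones ∧ coneDim C = Φ.dim},
        ((e r : Dmod K M Φ.dim) C) ∈
          Submodule.span K {Ideal.Quotient.mk (pIdeal K M C.1) (xv K M (a + σ))}

/-- The toric face ring is Gorenstein (with respect to the incidence function `eps` used to
define its canonical module): it is Cohen–Macaulay and `ω_{K[Φ]} ≅ K[Φ](−σ)` as
`ℤ^d`-graded modules for some `σ ∈ ℤ^d`. -/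
def IsGorensteinTFR (K : Type) [Field K] {d : ℕ} {Φ : Fan d} (M : MonoidalComplex Φ)
    (eps : Set (Vec d) → Set (Vec d) → K) : Prop :=
  IsCMRingAt (TFR K M) (mIdeal K M) ∧ ∃ σ : Fin d → ℤ, GradedShiftIso K M eps σ

/-- The quantity `χ̃_Φ(C) = (−1)^{dim C} ∑ᵢ (−1)^i f_i(star_Φ(C))`, the reduced Euler
characteristic of the order complex of `star_Φ(C) \ {C}`. -/
noncomputable def chiTilde {d : ℕ} (Φ : Fan d) (C : Set (Vec d)) : ℤ :=
  (-1 : ℤ) ^ (coneDim C) *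
    ∑ i ∈ Finset.range (Φ.dim + 1),
      (-1 : ℤ) ^ i * ((starSet Φ C ∩ {D | coneDim D = i}).ncard : ℤ)

/-- An Euler fan: a pure fan with `χ̃_Φ(C) = (−1)^{dim Φ − dim C}` for all cones `C`. -/
def Fan.IsEuler {d : ℕ} (Φ : Fan d) : Prop :=
  Φ.Pure ∧ ∀ C ∈ Φ.cones, chiTilde Φ C = (-1 : ℤ) ^ (Φ.dim - coneDim C)

lemma coneGen_smul {d : ℕ} {S : Set (Vec d)} {c : ℝ} (hc : 0 ≤ c) {x : Vec d}
    (hx : x ∈ coneGen S) : c • x ∈ coneGen S := by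
  obtain ⟨t, lam, hts, hlam, rfl⟩ := hx
  refine ⟨t, fun v => c * lam v, hts, fun v => mul_nonneg hc (hlam v), ?_⟩
  rw [Finset.smul_sum]
  exact Finset.sum_congr rfl fun v _ => by rw [smul_smul]

lemma coneGen_add {d : ℕ} {S : Set (Vec d)} {x y : Vec d}
    (hx : x ∈ coneGen S) (hy : y ∈ coneGen S) : x + y ∈ coneGen S := by
  obtain ⟨t₁, lam₁, ht₁, hlam₁, rfl⟩ := hx
  obtain ⟨t₂, lam₂, ht₂, hlam₂, rfl⟩ := hy
  classical
  refine ⟨t₁ ∪ t₂,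
    fun v => (if v ∈ t₁ then lam₁ v else 0) + (if v ∈ t₂ then lam₂ v else 0),
    ?_, ?_, ?_⟩
  · rw [Finset.coe_union]; exact Set.union_subset ht₁ ht₂
  · intro v
    have h1 : 0 ≤ (if v ∈ t₁ then lam₁ v else 0) := by split <;> simp [hlam₁ v]
    have h2 : 0 ≤ (if v ∈ t₂ then lam₂ v else 0) := by split <;> simp [hlam₂ v]
    dsimp only
    linarith
  · have e1 : ∑ v ∈ t₁, lam₁ v • v
        = ∑ v ∈ t₁ ∪ t₂, (if v ∈ t₁ then lam₁ v else 0) • v := by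
      have h := Finset.sum_subset (f := fun v => (if v ∈ t₁ then lam₁ v else 0) • v)
        (Finset.subset_union_left : t₁ ⊆ t₁ ∪ t₂)
        (fun v _ hv => by simp [if_neg hv])
      rw [← h]
      exact Finset.sum_congr rfl fun v hv => by simp [if_pos hv]
    have e2 : ∑ v ∈ t₂, lam₂ v • v
        = ∑ v ∈ t₁ ∪ t₂, (if v ∈ t₂ then lam₂ v else 0) • v := by
      have h := Finset.sum_subset (f := fun v => (if v ∈ t₂ then lam₂ v else 0) • v)
        (Finset.subset_union_right : t₂ ⊆ t₁ ∪ t₂)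
        (fun v _ hv => by simp [if_neg hv])
      rw [← h]
      exact Finset.sum_congr rfl fun v hv => by simp [if_pos hv]
    rw [e1, e2, ← Finset.sum_add_distrib]
    exact Finset.sum_congr rfl fun v _ => (add_smul _ _ _).symm

lemma ratCone_smul {d : ℕ} {C : Set (Vec d)} (h : IsRatCone C) {c : ℝ} (hc : 0 ≤ c)
    {x : Vec d} (hx : x ∈ C) : c • x ∈ C := by
  obtain ⟨t, -, rfl⟩ := h; exact coneGen_smul hc hx

lemma ratCone_add {d : ℕ} {C : Set (Vec d)} (h : IsRatCone C) {x y : Vec d}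
    (hx : x ∈ C) (hy : y ∈ C) : x + y ∈ C := by
  obtain ⟨t, -, rfl⟩ := h; exact coneGen_add hx hy

lemma mem_relint_face {d : ℕ} {C F : Set (Vec d)}
    (hC : IsRatCone C) (hF : IsRatCone F)
    (hface : ∀ x ∈ C, ∀ y ∈ C, x + y ∈ F → x ∈ F)
    {x : Vec d} (hx : x ∈ relint C) (hxF : x ∈ F) : C ⊆ F := by
  intro y hy
  obtain ⟨hxC, hrel⟩ := hx
  obtain ⟨t, ht1, hz⟩ := hrel y hy
  have h1 : (0:ℝ) ≤ t - 1 := by linarith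
  have hty : (t - 1) • y ∈ C := ratCone_smul hC h1 hy
  have htx : t • x ∈ F := ratCone_smul hF (by linarith) hxF
  have hsum : ((t - 1) • y) + (t • x + (1 - t) • y) = t • x := by module
  have hmem : (t - 1) • y ∈ F := hface _ hty _ hz (by rw [hsum]; exact htx)
  have h2 := ratCone_smul hF (inv_nonneg.mpr h1) hmem
  rwa [smul_smul, inv_mul_cancel₀ (by linarith : t - 1 ≠ 0), one_smul] at h2

lemma sum_mem_relint {d : ℕ} (t : Finset (Vec d)) (N : ℝ) (hN : 0 < N) :
    (∑ v ∈ t, N • v) ∈ relint (coneGen (↑t : Set (Vec d))) := by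
  classical
  constructor
  · exact ⟨t, fun _ => N, subset_rfl, fun _ => hN.le, rfl⟩
  · intro y hy
    obtain ⟨t', μ, ht', hμ, rfl⟩ := hy
    have ht'' : t' ⊆ t := by exact_mod_cast ht'
    set ind : Vec d → ℝ := fun v => if v ∈ t' then μ v else 0 with hind
    have hind_nonneg : ∀ v, 0 ≤ ind v := by
      intro v; simp only [hind]; split
      · exact hμ v
      · exact le_rfl
    set S : ℝ := ∑ v ∈ t', μ v with hS
    have hS0 : 0 ≤ S := Finset.sum_nonneg fun v _ => hμ v
    have hindS : ∀ v, ind v ≤ S := by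
      intro v; simp only [hind]; split
      · exact Finset.single_le_sum (fun i _ => hμ i) (by assumption)
      · exact hS0
    set ε : ℝ := N / (1 + S) with hε
    have hε0 : 0 < ε := div_pos hN (by linarith)
    have hεN : ε * (1 + S) = N := div_mul_cancel₀ _ (by positivity)
    refine ⟨1 + ε, by linarith, ?_⟩
    refine ⟨t, fun v => (1 + ε) * N - ε * ind v, subset_rfl, ?_, ?_⟩
    · intro v
      have h1 : ε * ind v ≤ ε * (1 + S) :=
        mul_le_mul_of_nonneg_left (by linarith [hindS v]) hε0.le
      dsimp only
      nlinarith
    · have e1 : (1 + ε) • ∑ v ∈ t, N • v = ∑ v ∈ t, ((1 + ε) * N) • v := by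
        rw [Finset.smul_sum]
        exact Finset.sum_congr rfl fun v _ => by rw [smul_smul]
      have e2 : (1 - (1 + ε)) • ∑ v ∈ t', μ v • v
          = ∑ v ∈ t, (-(ε * ind v)) • v := by
        have h := Finset.sum_subset (f := fun v => (-(ε * ind v)) • v) ht''
          (fun v _ hv => by simp only [hind, if_neg hv, mul_zero, neg_zero, zero_smul])
        rw [← h, Finset.smul_sum]
        refine Finset.sum_congr rfl fun v hv => ?_
        rw [smul_smul]
        congr 1
        simp only [hind, if_pos hv]
        ring
      rw [e1, e2, ← Finset.sum_add_distrib]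
      refine Finset.sum_congr rfl fun v _ => ?_
      rw [← add_smul]
      ring_nf

lemma latt_add {d : ℕ} (a b : Fin d → ℤ) : latt (a + b) = latt a + latt b := by
  funext i; simp [latt]

lemma exists_int_relint {d : ℕ} {C : Set (Vec d)} (h : IsRatCone C) :
    ∃ a : Fin d → ℤ, latt a ∈ relint C := by
  classical
  obtain ⟨t, hrat, rfl⟩ := h
  set q : Vec d → Fin d → ℚ := fun v i => if h : ∃ r : ℚ, v i = (r : ℝ) then h.choose else 0
    with hq
  have hvq : ∀ v ∈ t, ∀ i, v i = (q v i : ℝ) := by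
    intro v hv i
    have := hrat v hv i
    simp only [hq, dif_pos this]
    exact this.choose_spec
  set N : ℕ := ∏ v ∈ t, ∏ i, (q v i).den with hNdef
  have hdvd : ∀ v ∈ t, ∀ i, (q v i).den ∣ N := by
    intro v hv i
    exact dvd_trans (Finset.dvd_prod_of_mem (fun i => (q v i).den) (Finset.mem_univ i))
      (Finset.dvd_prod_of_mem (fun v => ∏ i, (q v i).den) hv)
  have hN0 : 0 < N := by
    apply Finset.prod_pos; intro v _; apply Finset.prod_pos; intro i _
    exact (q v i).den_pos
  refine ⟨fun i => ∑ v ∈ t, (N / (q v i).den : ℕ) * (q v i).num, ?_⟩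
  have hlatteq : latt (fun i => ∑ v ∈ t, ((N / (q v i).den : ℕ) : ℤ) * (q v i).num)
      = ∑ v ∈ t, (N : ℝ) • v := by
    funext i
    simp only [latt, Finset.sum_apply, Pi.smul_apply, smul_eq_mul]
    push_cast
    refine Finset.sum_congr rfl fun v hv => ?_
    rw [hvq v hv i]
    have h1 : ((q v i).den : ℚ) * ((N / (q v i).den : ℕ) : ℚ) = (N : ℚ) := by
      exact_mod_cast Nat.mul_div_cancel' (hdvd v hv i)
    have hden : ((q v i).den : ℚ) ≠ 0 := by exact_mod_cast (q v i).den_ne_zero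
    have h3 : q v i * ((q v i).den : ℚ) = ((q v i).num : ℚ) :=
      (eq_div_iff hden).mp (Rat.num_div_den (q v i)).symm
    have key : ((N / (q v i).den : ℕ) : ℚ) * ((q v i).num : ℚ) = (N : ℚ) * q v i := by
      rw [← h3, ← h1]; ring
    have keyR := congrArg (fun x : ℚ => (x : ℝ)) key
    push_cast at keyR ⊢
    convert keyR using 2
    rw [← Int.natCast_div, Int.cast_natCast]
  rw [hlatteq]
  exact sum_mem_relint t N (by exact_mod_cast hN0)

/-- Let `Φ` be a rational pointed fan in `ℝ^d` such that the toric face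
ring `K[Φ]` is Gorenstein with `ω_{K[Φ]} ≅ K[Φ](−σ)` as `ℤ^d`-graded modules for some
`σ ∈ ℤ^d`.  Then `σ` lies in every maximal cone of `Φ`. -/
theorem sigma_mem_maximal_cones
    (K : Type) [Field K] {d : ℕ} (Φ : Fan d) (M : MonoidalComplex Φ) (hlatt : M.IsLattice)
    (eps : Set (Vec d) → Set (Vec d) → K) (heps : IsIncidence K Φ eps)
    (hCM : IsCMRingAt (TFR K M) (mIdeal K M))
    (σ : Fin d → ℤ) (hiso : GradedShiftIso K M eps σ) :
    ∀ C : Set (Vec d), Φ.IsMaximalCone C → latt σ ∈ C := by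
  classical
  intro C₀ hmax
  by_contra hσ
  obtain ⟨h₀, hmaxi⟩ := hmax
  have hmon : ∀ C, C ∈ Φ.cones → ∀ a : Fin d → ℤ, a ∈ M.mon C ↔ latt a ∈ C := by
    intro C hC a
    constructor
    · intro ha
      have h : a ∈ (M.mon C : Set (Fin d → ℤ)) := ha
      rw [hlatt C hC] at h
      exact h
    · intro ha
      have h : a ∈ latt ⁻¹' C := ha
      rw [← hlatt C hC] at h
      exact h
  obtain ⟨a₀, ha₀⟩ := exists_int_relint (Φ.isRatCone C₀ h₀)
  have ha₀C₀ : latt a₀ ∈ C₀ := ha₀.1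
  have ha₀mon : a₀ ∈ M.mon C₀ := (hmon C₀ h₀ a₀).mpr ha₀C₀
  have ha₀supp : a₀ ∈ M.supp := Set.mem_biUnion h₀ ha₀mon
  have hDeq : ∀ D ∈ Φ.cones, latt a₀ ∈ D → D = C₀ := by
    intro D hD haD
    apply hmaxi D hD
    have hface := (Φ.inter_face C₀ h₀ D hD).1
    have hsub : C₀ ⊆ C₀ ∩ D :=
      mem_relint_face (Φ.isRatCone C₀ h₀) hface.2.1 hface.2.2 ha₀ ⟨ha₀C₀, haD⟩
    exact fun y hy => (hsub hy).2
  -- the product x^{a₀} · x^σ vanishes in the toric face ring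
  have hprod : xv K M a₀ * xv K M σ = 0 := by
    by_cases hσs : σ ∈ M.supp
    · have hnc : ¬ ∃ C ∈ Φ.cones, a₀ ∈ M.mon C ∧ σ ∈ M.mon C := by
        rintro ⟨D, hD, haD, hσD⟩
        have hDC₀ : D = C₀ := hDeq D hD ((hmon D hD a₀).mp haD)
        exact hσ ((hmon C₀ h₀ σ).mp (hDC₀ ▸ hσD))
      have hmem : (MvPolynomial.X a₀ * MvPolynomial.X σ : MvPolynomial (Fin d → ℤ) K)
          ∈ tfrRel K M := by
        apply Ideal.subset_span
        left; left; right
        exact ⟨a₀, σ, ha₀supp, hσs, hnc, rfl⟩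
      have h := Ideal.Quotient.eq_zero_iff_mem.mpr hmem
      rw [map_mul] at h
      exact h
    · have hmem : (MvPolynomial.X σ : MvPolynomial (Fin d → ℤ) K) ∈ tfrRel K M := by
        apply Ideal.subset_span
        left; right
        exact ⟨σ, hσs, rfl⟩
      have h : xv K M σ = 0 := Ideal.Quotient.eq_zero_iff_mem.mpr hmem
      rw [h, mul_zero]
  -- x^0 = 1
  have hx0 : xv K M 0 = (1 : TFR K M) := by
    have hmem : (MvPolynomial.X 0 - 1 : MvPolynomial (Fin d → ℤ) K) ∈ tfrRel K M := by
      apply Ideal.subset_span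
      right
      rfl
    have h := Ideal.Quotient.eq_zero_iff_mem.mpr hmem
    rw [map_sub, map_one, sub_eq_zero] at h
    exact h
  obtain ⟨e, he⟩ := hiso
  have h1span : (1 : TFR K M) ∈ Submodule.span K {xv K M 0} := by
    rw [hx0]
    exact Submodule.mem_span_singleton_self 1
  -- every component of e(x^{a₀}) vanishes
  have hcomp : ∀ C : {C : Set (Vec d) // C ∈ Φ.cones ∧ coneDim C = Φ.dim},
      ((e (xv K M a₀) : Dmod K M Φ.dim) C) = 0 := by
    intro C
    have h1 := he 0 1 h1span C
    rw [zero_add] at h1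
    obtain ⟨c, hc⟩ := Submodule.mem_span_singleton.mp h1
    have heq : e (xv K M a₀) = xv K M a₀ • e 1 := by
      conv_lhs => rw [show xv K M a₀ = xv K M a₀ • (1 : TFR K M) by
        rw [smul_eq_mul, mul_one]]
      rw [map_smul]
    rw [heq]
    have hcoe : ((xv K M a₀ • e 1 : canonicalMod K M eps) : Dmod K M Φ.dim) C
        = xv K M a₀ • ((e 1 : Dmod K M Φ.dim) C) := rfl
    rw [hcoe, ← hc, smul_comm]
    have hmk : xv K M a₀ • Ideal.Quotient.mk (pIdeal K M C.1) (xv K M σ)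
        = Ideal.Quotient.mk (pIdeal K M C.1) (xv K M a₀ * xv K M σ) := rfl
    rw [hmk, hprod, map_zero, smul_zero]
  have hez : e (xv K M a₀) = 0 := by
    apply Subtype.ext
    have h : ((e (xv K M a₀)) : Dmod K M Φ.dim) = 0 := funext hcomp
    exact h
  have hxa0 : xv K M a₀ = 0 := by
    have := e.map_eq_zero_iff.mp hez
    exact this
  -- the evaluation map detecting x^{a₀}
  set vK : (Fin d → ℤ) → K := fun a => if a ∈ M.mon C₀ then 1 else 0 with hvK
  have hsplit : ∀ a b (C : Set (Vec d)), C ∈ Φ.cones → a ∈ M.mon C → b ∈ M.mon C →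
      a + b ∈ M.mon C₀ → a ∈ M.mon C₀ ∧ b ∈ M.mon C₀ := by
    intro a b C hC haC hbC hab
    have hfa := (Φ.inter_face C₀ h₀ C hC).2
    have haC' : latt a ∈ C := (hmon C hC a).mp haC
    have hbC' : latt b ∈ C := (hmon C hC b).mp hbC
    have habC : latt a + latt b ∈ C₀ ∩ C := by
      constructor
      · rw [← latt_add]
        exact (hmon C₀ h₀ _).mp hab
      · exact ratCone_add (Φ.isRatCone C hC) haC' hbC'
    have h1 := hfa.2.2 (latt a) haC' (latt b) hbC' habC
    have h2 := hfa.2.2 (latt b) hbC' (latt a) haC' (by rwa [add_comm])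
    exact ⟨(hmon C₀ h₀ a).mpr h1.1, (hmon C₀ h₀ b).mpr h2.1⟩
  have hker : tfrRel K M ≤ RingHom.ker (MvPolynomial.eval vK) := by
    rw [tfrRel, Ideal.span_le]
    rintro p hp
    simp only [Set.mem_union] at hp
    rw [SetLike.mem_coe, RingHom.mem_ker]
    rcases hp with ((⟨a, b, ⟨C, hC, haC, hbC⟩, rfl⟩ | ⟨a, b, ha, hb, hnc, rfl⟩)
      | ⟨a, ha, rfl⟩) | hp
    · rw [map_sub, map_mul, MvPolynomial.eval_X, MvPolynomial.eval_X, MvPolynomial.eval_X]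
      by_cases hA : a ∈ M.mon C₀ <;> by_cases hB : b ∈ M.mon C₀
      · have hab : a + b ∈ M.mon C₀ := (M.mon C₀).add_mem hA hB
        simp [hvK, hA, hB, hab]
      · have hab : a + b ∉ M.mon C₀ := fun habm => hB (hsplit a b C hC haC hbC habm).2
        simp [hvK, hB, hab]
      · have hab : a + b ∉ M.mon C₀ := fun habm => hA (hsplit a b C hC haC hbC habm).1
        simp [hvK, hA, hab]
      · have hab : a + b ∉ M.mon C₀ := fun habm => hA (hsplit a b C hC haC hbC habm).1
        simp [hvK, hA, hab]
    · rw [map_mul, MvPolynomial.eval_X, MvPolynomial.eval_X]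
      have : ¬ (a ∈ M.mon C₀ ∧ b ∈ M.mon C₀) := fun ⟨hA, hB⟩ => hnc ⟨C₀, h₀, hA, hB⟩
      rcases not_and_or.mp this with hA | hB
      · simp [hvK, hA]
      · simp [hvK, hB]
    · have hA : a ∉ M.mon C₀ := fun h => ha (Set.mem_biUnion h₀ h)
      rw [MvPolynomial.eval_X]
      simp [hvK, hA]
    · rw [Set.mem_singleton_iff] at hp
      subst hp
      rw [map_sub, map_one, MvPolynomial.eval_X]
      simp [hvK, (M.mon C₀).zero_mem]
  have hXa₀ : (MvPolynomial.X a₀ : MvPolynomial (Fin d → ℤ) K) ∈ tfrRel K M :=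
    Ideal.Quotient.eq_zero_iff_mem.mp hxa0
  have hcontra : MvPolynomial.eval vK (MvPolynomial.X a₀) = 0 := hker hXa₀
  rw [MvPolynomial.eval_X] at hcontra
  simp only [hvK, if_pos ha₀mon] at hcontra
  exact one_ne_zero hcontra
end
end
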